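/- arXiv:2505.18856 — 5 statements merged into one kernel-verified Lean document; each statement's English description precedes it below -/
import Mathlib

section
/- Let Quat_{n+1} be the group generated by elements â₁, …, â_n subject to the relations â_i² = -1 for all i, â_i â_j = â_j â_i when |i-j| ≠ 1, and â_i â_j = -â_j â_i when |i-j| = 1 (where -1 is a central element of order 2). Then Quat_{n+1} has cardinality 2^{n+1}, with elements ± â₁^{ε₁} ⋯ â_n^{ε_n} for ε_k ∈ {0,1}. -/
/-- The defining relators of `Quat_{n+1}`: generators `â_1, …, â_n` (indexed by `Fin n`,
written `Sum.inl i`) and a central element `-1` (written `Sum.inr ()`), with relations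
`(-1)² = 1`, `-1` central, `â_i² = -1`, `â_i â_j = â_j â_i` for `|i-j| ≠ 1` and
`â_i â_j = -â_j â_i` for `|i-j| = 1`. -/
def quatRels (n : ℕ) : Set (FreeGroup (Fin n ⊕ Unit)) :=
  {w | w = (FreeGroup.of (Sum.inr ()))^2} ∪
  {w | ∃ i : Fin n, w = FreeGroup.of (Sum.inr ()) * FreeGroup.of (Sum.inl i) *
      (FreeGroup.of (Sum.inr ()))⁻¹ * (FreeGroup.of (Sum.inl i))⁻¹} ∪
  {w | ∃ i : Fin n, w = (FreeGroup.of (Sum.inl i))^2 * (FreeGroup.of (Sum.inr ()))⁻¹} ∪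
  {w | ∃ i j : Fin n, (i : ℕ) + 1 ≠ (j : ℕ) ∧ (j : ℕ) + 1 ≠ (i : ℕ) ∧
      w = FreeGroup.of (Sum.inl i) * FreeGroup.of (Sum.inl j) *
        (FreeGroup.of (Sum.inl i))⁻¹ * (FreeGroup.of (Sum.inl j))⁻¹} ∪
  {w | ∃ i j : Fin n, ((i : ℕ) + 1 = (j : ℕ) ∨ (j : ℕ) + 1 = (i : ℕ)) ∧
      w = FreeGroup.of (Sum.inl i) * FreeGroup.of (Sum.inl j) *
        (FreeGroup.of (Sum.inr ()) * FreeGroup.of (Sum.inl j) * FreeGroup.of (Sum.inl i))⁻¹}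

/-!
Commuting two generators costs at most the central sign `-1`, and `âᵢ² = -1`, so every element
can be sorted into the form `± â₁^{ε₁} ⋯ âₙ^{εₙ}`: there are at most `2^{n+1}` elements. These
normal forms are distinct because the relations hold in the central extension of `(ZMod 2)ⁿ` by
`ZMod 2` with a bilinear cocycle, where the normal form `± ∏ âᵢ^{εᵢ}` has `(ZMod 2)ⁿ`-component `ε`
and `-1` is not trivial.
-/

section MaskProd

variable {G ι : Type*} [Group G]

def maskProd (x : ι → G) (e : ι → Bool) (l : List ι) : G :=
  (l.map fun i => if e i then x i else 1).prod

@[simp]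
theorem maskProd_nil (x : ι → G) (e : ι → Bool) : maskProd x e [] = 1 := rfl

@[simp]
theorem maskProd_cons (x : ι → G) (e : ι → Bool) (a : ι) (l : List ι) :
    maskProd x e (a :: l) = (if e a then x a else 1) * maskProd x e l := List.prod_cons

theorem maskProd_congr (x : ι → G) {e e' : ι → Bool} {l : List ι} (h : ∀ i ∈ l, e i = e' i) :
    maskProd x e l = maskProd x e' l :=
  congrArg List.prod (List.map_congr_left fun i hi => by rw [h i hi])

theorem maskProd_false (x : ι → G) (l : List ι) : maskProd x (fun _ => false) l = 1 := by
  induction l <;> simp_all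

variable {C : Subgroup G} (hC : C ≤ Subgroup.center G) {x : ι → G}
include hC

theorem mul_comm_of_mem_of_le_center {c : G} (hc : c ∈ C) (g : G) : g * c = c * g :=
  Subgroup.mem_center_iff.mp (hC hc) g

theorem exists_maskProd_mul_comm (hcomm : ∀ i j, ∃ c ∈ C, x i * x j = c * (x j * x i))
    (e : ι → Bool) (j : ι) :
    ∀ l : List ι, ∃ c ∈ C, maskProd x e l * x j = c * (x j * maskProd x e l)
  | [] => ⟨1, C.one_mem, by simp⟩
  | a :: l => by
    obtain ⟨c, hc, h⟩ := exists_maskProd_mul_comm hcomm e j l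
    obtain ⟨c', hc', h'⟩ : ∃ c' ∈ C,
        (if e a then x a else 1) * x j = c' * (x j * if e a then x a else 1) := by
      cases e a
      · exact ⟨1, C.one_mem, by simp⟩
      · simpa using hcomm a j
    refine ⟨c' * c, C.mul_mem hc' hc, ?_⟩
    rw [maskProd_cons, mul_assoc, h, ← mul_assoc, mul_comm_of_mem_of_le_center hC hc,
      mul_assoc c, ← mul_assoc _ (x j), h']
    simp only [← mul_assoc, mul_comm_of_mem_of_le_center hC hc c']

theorem exists_maskProd_mul_of_mem (hcomm : ∀ i j, ∃ c ∈ C, x i * x j = c * (x j * x i))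
    (hsq : ∀ i, x i * x i ∈ C) [DecidableEq ι] (e : ι → Bool) (j : ι) :
    ∀ l : List ι, l.Nodup → j ∈ l →
      ∃ c ∈ C, maskProd x e l * x j = c * maskProd x (Function.update e j (!e j)) l
  | a :: l, hnd, hj => by
    obtain ⟨ha, hl⟩ := List.nodup_cons.mp hnd
    by_cases haj : a = j
    · subst haj
      obtain ⟨c, hc, h⟩ := exists_maskProd_mul_comm hC hcomm e a l
      have hrest : maskProd x (Function.update e a (!e a)) l = maskProd x e l :=
        maskProd_congr x fun i hi => Function.update_of_ne (ne_of_mem_of_not_mem hi ha) _ _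
      refine ⟨c * if e a then x a * x a else 1,
        C.mul_mem hc (by split <;> simp [hsq, C.one_mem]), ?_⟩
      rw [maskProd_cons, maskProd_cons, hrest, Function.update_self, mul_assoc, h]
      cases e a <;> simp [← mul_assoc, mul_comm_of_mem_of_le_center hC hc]
    · obtain ⟨c, hc, h⟩ := exists_maskProd_mul_of_mem hcomm hsq e j l hl
        (List.mem_of_ne_of_mem (Ne.symm haj) hj)
      refine ⟨c, hc, ?_⟩
      rw [maskProd_cons, maskProd_cons, Function.update_of_ne haj, mul_assoc, h, ← mul_assoc,
        mul_comm_of_mem_of_le_center hC hc, mul_assoc]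

theorem exists_eq_mul_maskProd_of_mem_closure
    (hcomm : ∀ i j, ∃ c ∈ C, x i * x j = c * (x j * x i)) (hsq : ∀ i, x i * x i ∈ C)
    {l : List ι} (hnd : l.Nodup) (hl : ∀ i, i ∈ l)
    {g : G} (hg : g ∈ Subgroup.closure (C ∪ Set.range x)) :
    ∃ c ∈ C, ∃ e, g = c * maskProd x e l := by
  classical
  have mul_mem_C : ∀ g y, y ∈ C → (∃ c ∈ C, ∃ e, g = c * maskProd x e l) →
      ∃ c ∈ C, ∃ e, g * y = c * maskProd x e l := by
    rintro _ c' hc' ⟨c, hc, e, rfl⟩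
    exact ⟨c * c', C.mul_mem hc hc', e, by
      rw [mul_assoc, mul_comm_of_mem_of_le_center hC hc', ← mul_assoc]⟩
  have mul_x : ∀ g j, (∃ c ∈ C, ∃ e, g = c * maskProd x e l) →
      ∃ c ∈ C, ∃ e, g * x j = c * maskProd x e l := by
    rintro _ j ⟨c, hc, e, rfl⟩
    obtain ⟨c', hc', h⟩ := exists_maskProd_mul_of_mem hC hcomm hsq e j l hnd (hl j)
    exact ⟨c * c', C.mul_mem hc hc', _, by rw [mul_assoc, h, mul_assoc]⟩
  induction hg using Subgroup.closure_induction_right with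
  | one => exact ⟨1, C.one_mem, fun _ => false, by rw [maskProd_false, mul_one]⟩
  | mul_right g _ y hy ih =>
    rcases hy with hy | ⟨j, rfl⟩
    · exact mul_mem_C g y hy ih
    · exact mul_x g j ih
  | mul_inv_cancel g _ y hy ih =>
    rcases hy with hy | ⟨j, rfl⟩
    · exact mul_mem_C g _ (C.inv_mem hy) ih
    · have hinv : g * (x j)⁻¹ = g * (x j * x j)⁻¹ * x j := by group
      rw [hinv]
      exact mul_x _ j (mul_mem_C g _ (C.inv_mem (hsq j)) ih)

end MaskProd

section CentralExtension

variable {R M : Type*} [CommRing R] [AddCommGroup M] [Module R M]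

@[ext]
structure BilinExt (B : LinearMap.BilinForm R M) where
  fst : R
  snd : M

namespace BilinExt

variable {B : LinearMap.BilinForm R M}

instance : Mul (BilinExt B) := ⟨fun a b => ⟨a.fst + b.fst + B a.snd b.snd, a.snd + b.snd⟩⟩

instance : One (BilinExt B) := ⟨⟨0, 0⟩⟩

instance : Inv (BilinExt B) := ⟨fun a => ⟨-a.fst + B a.snd a.snd, -a.snd⟩⟩

@[simp] theorem fst_mul (a b : BilinExt B) : (a * b).fst = a.fst + b.fst + B a.snd b.snd := rfl
@[simp] theorem snd_mul (a b : BilinExt B) : (a * b).snd = a.snd + b.snd := rfl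
@[simp] theorem fst_one : (1 : BilinExt B).fst = 0 := rfl
@[simp] theorem snd_one : (1 : BilinExt B).snd = 0 := rfl
@[simp] theorem fst_inv (a : BilinExt B) : a⁻¹.fst = -a.fst + B a.snd a.snd := rfl
@[simp] theorem snd_inv (a : BilinExt B) : a⁻¹.snd = -a.snd := rfl

instance : Group (BilinExt B) where
  mul_assoc a b c := by ext <;> simp <;> abel
  one_mul a := by ext <;> simp
  mul_one a := by ext <;> simp
  inv_mul_cancel a := by ext <;> simp

end BilinExt

end CentralExtension

abbrev Quat (n : ℕ) := PresentedGroup (quatRels n)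

namespace Quat

variable {n : ℕ}

def z : Quat n := PresentedGroup.of (Sum.inr ())

def x (i : Fin n) : Quat n := PresentedGroup.of (Sum.inl i)

def normalForm (p : Bool × (Fin n → Bool)) : Quat n :=
  (if p.1 then z else 1) * maskProd x p.2 (List.finRange n)

theorem z_mul_z : (z : Quat n) * z = 1 := by
  have h := PresentedGroup.one_of_mem (rels := quatRels n) (Or.inl (Or.inl (Or.inl (Or.inl rfl))))
  rwa [map_pow, pow_two] at h

theorem z_mul_x (i : Fin n) : z * x i = x i * z := by
  have h := PresentedGroup.one_of_mem (rels := quatRels n)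
    (Or.inl (Or.inl (Or.inl (Or.inr ⟨i, rfl⟩))))
  simp only [map_mul, map_inv] at h
  exact commutatorElement_eq_one_iff_mul_comm.mp h

theorem x_mul_x (i : Fin n) : x i * x i = z := by
  have h := PresentedGroup.mk_eq_mk_of_mul_inv_mem (rels := quatRels n)
    (Or.inl (Or.inl (Or.inr ⟨i, rfl⟩)))
  rwa [map_pow, pow_two] at h

theorem x_mul_x_of_not_adj {i j : Fin n} (hij : (i : ℕ) + 1 ≠ j) (hji : (j : ℕ) + 1 ≠ i) :
    x i * x j = x j * x i := by
  have h := PresentedGroup.one_of_mem (rels := quatRels n)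
    (Or.inl (Or.inr ⟨i, j, hij, hji, rfl⟩))
  simp only [map_mul, map_inv] at h
  exact commutatorElement_eq_one_iff_mul_comm.mp h

theorem x_mul_x_of_adj {i j : Fin n} (hadj : (i : ℕ) + 1 = j ∨ (j : ℕ) + 1 = i) :
    x i * x j = z * x j * x i := by
  have h := PresentedGroup.mk_eq_mk_of_mul_inv_mem (rels := quatRels n)
    (Or.inr ⟨i, j, hadj, rfl⟩)
  simp only [map_mul] at h
  exact h

theorem z_mem_center : (z : Quat n) ∈ Subgroup.center (Quat n) := by
  refine Subgroup.mem_center_iff.mpr fun g => ?_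
  have hg : g ∈ Subgroup.centralizer {z} := by
    refine PresentedGroup.generated_by _ _ (fun a => ?_) g
    rw [Subgroup.mem_centralizer_singleton_iff]
    cases a with
    | inl i => exact (z_mul_x i).symm
    | inr => rfl
  exact Subgroup.mem_centralizer_singleton_iff.mp hg

theorem zpowers_z_le_center : Subgroup.zpowers (z : Quat n) ≤ Subgroup.center (Quat n) :=
  Subgroup.zpowers_le.mpr z_mem_center

theorem exists_x_mul_x_eq (i j : Fin n) :
    ∃ c ∈ Subgroup.zpowers z, x i * x j = c * (x j * x i) := by
  by_cases hadj : (i : ℕ) + 1 = j ∨ (j : ℕ) + 1 = i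
  · exact ⟨z, Subgroup.mem_zpowers z, by rw [x_mul_x_of_adj hadj, mul_assoc]⟩
  · push Not at hadj
    exact ⟨1, Subgroup.one_mem _, by rw [x_mul_x_of_not_adj hadj.1 hadj.2, one_mul]⟩

theorem eq_ite_of_mem_zpowers_z {c : Quat n} (hc : c ∈ Subgroup.zpowers z) :
    ∃ s : Bool, c = if s then z else 1 := by
  obtain ⟨k, rfl⟩ := hc
  dsimp only
  rw [zpow_eq_zpow_emod' k (n := 2) (by rw [pow_two, z_mul_z])]
  rcases Int.emod_two_eq_zero_or_one k with h | h
  · exact ⟨false, by simp [h]⟩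
  · exact ⟨true, by simp [h]⟩

theorem normalForm_surjective : Function.Surjective (normalForm (n := n)) := by
  intro g
  have hg : g ∈ Subgroup.closure (Subgroup.zpowers (z : Quat n) ∪ Set.range x : Set (Quat n)) := by
    refine PresentedGroup.generated_by _ _ (fun a => Subgroup.subset_closure ?_) g
    cases a with
    | inl i => exact Or.inr ⟨i, rfl⟩
    | inr => exact Or.inl (Subgroup.mem_zpowers z)
  obtain ⟨c, hc, e, rfl⟩ := exists_eq_mul_maskProd_of_mem_closure zpowers_z_le_center
    exists_x_mul_x_eq (fun i => x_mul_x i ▸ Subgroup.mem_zpowers z) (List.nodup_finRange n)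
    List.mem_finRange hg
  obtain ⟨s, rfl⟩ := eq_ite_of_mem_zpowers_z hc
  exact ⟨(s, e), rfl⟩

variable {H : Type*} [Group H]

def lift (z' : H) (x' : Fin n → H) (hz : z' * z' = 1) (hzx : ∀ i, z' * x' i = x' i * z')
    (hx : ∀ i, x' i * x' i = z')
    (hfar : ∀ i j : Fin n, (i : ℕ) + 1 ≠ j → (j : ℕ) + 1 ≠ i → x' i * x' j = x' j * x' i)
    (hadj : ∀ i j : Fin n, (i : ℕ) + 1 = j ∨ (j : ℕ) + 1 = i → x' i * x' j = z' * x' j * x' i) :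
    Quat n →* H :=
  PresentedGroup.toGroup (f := Sum.elim x' fun _ => z') <| by
    rintro r ((((rfl | ⟨i, rfl⟩) | ⟨i, rfl⟩) | ⟨i, j, hij, hji, rfl⟩) | ⟨i, j, h, rfl⟩) <;>
      simp only [map_mul, map_inv, map_pow, FreeGroup.lift_apply_of, Sum.elim_inl, Sum.elim_inr]
    · rw [pow_two, hz]
    · exact commutatorElement_eq_one_iff_mul_comm.mpr (hzx i)
    · rw [pow_two, hx, mul_inv_cancel]
    · exact commutatorElement_eq_one_iff_mul_comm.mpr (hfar i j hij hji)
    · rw [hadj i j h, mul_inv_cancel]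

/-- `β(eᵢ, eᵢ) = 1`, and `β(eᵢ, eⱼ) + β(eⱼ, eᵢ) = 1` exactly when `|i - j| = 1`: these are the
relations of `Quat n` read in the extension, with `-1 ↦ (1, 0)` and `âᵢ ↦ (0, eᵢ)`. -/
def cocycle (n : ℕ) : LinearMap.BilinForm (ZMod 2) (Fin n → ZMod 2) :=
  Matrix.toBilin' (.of fun i j => if i = j ∨ (j : ℕ) + 1 = i then 1 else 0)

@[simp]
theorem cocycle_single (i j : Fin n) :
    cocycle n (Pi.single i 1) (Pi.single j 1) = if i = j ∨ (j : ℕ) + 1 = i then 1 else 0 :=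
  Matrix.toBilin'_single _ _ _

theorem single_add_single_self (i : Fin n) :
    (Pi.single i 1 + Pi.single i 1 : Fin n → ZMod 2) = 0 := by
  rw [← two_smul (ZMod 2), show (2 : ZMod 2) = 0 from rfl, zero_smul]

def toExt (n : ℕ) : Quat n →* BilinExt (cocycle n) :=
  lift ⟨1, 0⟩ (fun i => ⟨0, Pi.single i 1⟩)
    (by ext : 1 <;> simp; rfl)
    (fun i => by ext : 1 <;> simp [add_comm])
    (fun i => by ext : 1 <;> simp [single_add_single_self])
    (fun i j hij hji => by
      ext : 1
      · by_cases hne : i = j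
        · simp [hne]
        · simp [hij, hji, hne, Ne.symm hne]
      · simp [add_comm])
    (fun i j h => by
      have hne : i ≠ j := by rintro rfl; omega
      ext : 1
      · rcases h with h | h
        · simp [h, hne, Ne.symm hne, show (j : ℕ) + 1 ≠ i by omega]; rfl
        · simp [h, hne, Ne.symm hne, show (i : ℕ) + 1 ≠ j by omega]
      · simp [add_comm])

theorem toExt_z : toExt n z = ⟨1, 0⟩ := by
  unfold toExt lift; exact PresentedGroup.toGroup.of _

theorem toExt_x (i : Fin n) : toExt n (x i) = ⟨0, Pi.single i 1⟩ := by
  unfold toExt lift; exact PresentedGroup.toGroup.of _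

theorem z_ne_one : (z : Quat n) ≠ 1 := fun h => by
  simpa [toExt_z] using congrArg (fun g => (toExt n g).fst) h

theorem snd_toExt_maskProd (e : Fin n → Bool) (l : List (Fin n)) :
    (toExt n (maskProd x e l)).snd = (l.map fun i => if e i then Pi.single i 1 else 0).sum := by
  induction l with
  | nil => simp
  | cons a l ih => cases h : e a <;> simp [h, ih, toExt_x]

theorem snd_toExt_normalForm (s : Bool) (e : Fin n → Bool) (k : Fin n) :
    (toExt n (normalForm (s, e))).snd k = if e k then 1 else 0 := by
  have hsign : (toExt n (if s then z else 1)).snd = 0 := by cases s <;> simp [toExt_z]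
  rw [normalForm, map_mul, BilinExt.snd_mul, hsign, zero_add, snd_toExt_maskProd,
    ← Fin.sum_univ_def, Finset.sum_apply,
    Finset.sum_eq_single k (fun i _ hik => by simp [ite_apply, Ne.symm hik]) (by simp)]
  simp [ite_apply]

theorem normalForm_injective : Function.Injective (normalForm (n := n)) := by
  rintro ⟨s, e⟩ ⟨s', e'⟩ h
  have he : e = e' := funext fun k => by
    have hk := congrArg (fun g => (toExt n g).snd k) h
    simp only [snd_toExt_normalForm] at hk
    cases h₁ : e k <;> cases h₂ : e' k <;> simp [h₁, h₂] at hk ⊢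
  subst he
  have hs := mul_right_cancel h
  cases s <;> cases s' <;> simp_all [z_ne_one, z_ne_one.symm]

end Quat

/-- The group `Quat_{n+1}` presented by the above generators and relations has cardinality
`2^{n+1}`, its elements being exactly `± â_1^{ε₁} ⋯ â_n^{ε_n}` with `ε_k ∈ {0,1}`. -/
theorem quat_card (n : ℕ) :
    Nat.card (PresentedGroup (quatRels n)) = 2^(n+1) ∧
    ∀ g : PresentedGroup (quatRels n), ∃ (s : Bool) (e : Fin n → Bool),
      g = (if s then PresentedGroup.of (Sum.inr ()) else 1) *
          (((List.finRange n).map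
            (fun i => if e i then PresentedGroup.of (Sum.inl i) else 1)).prod) := by
  refine ⟨?_, fun g => ?_⟩
  · rw [← Nat.card_eq_of_bijective _ ⟨Quat.normalForm_injective, Quat.normalForm_surjective⟩]
    simp [pow_succ, mul_comm]
  · obtain ⟨⟨s, e⟩, h⟩ := Quat.normalForm_surjective g
    exact ⟨s, e, h.symm⟩
end

section
/- In the Clifford algebra Cl⁰_{n+1} with generators â_i as above and á_i = (1+â_i)/√2, the braid relation á_i á_{i+1} á_i = á_{i+1} á_i á_{i+1} holds for all 1 ≤ i ≤ n-1. Moreover if |i-j| ≠ 1 then á_i á_j = á_j á_i, and if |i-j| = 1 then â_j á_i = á_i⁻¹ â_j. -/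
/-- `á_i = (1 + â_i)/√2`. -/
noncomputable def acuteEl {n : ℕ} {A : Type*} [Ring A] [Algebra ℝ A] (a : Fin n → A) (i : Fin n) : A :=
  (Real.sqrt 2)⁻¹ • (1 + a i)

/-- `à_i = (1 - â_i)/√2 = á_i⁻¹`. -/
noncomputable def graveEl {n : ℕ} {A : Type*} [Ring A] [Algebra ℝ A] (a : Fin n → A) (i : Fin n) : A :=
  (Real.sqrt 2)⁻¹ • (1 - a i)

/-!
If `x² = -1` and `x` anticommutes with `y`, then `x y x = y`, so
`(1 + x)(1 + y)(1 + x) = 2 (x + y)`, which is symmetric in `x` and `y`: this is the braid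
relation up to the central scalar `(1/√2)³`.
-/

section Ring

variable {A : Type*} [Ring A] {x y : A}

theorem mul_mul_eq_right_of_anticomm (hx : x * x = -1) (hxy : x * y = -(y * x)) :
    x * y * x = y := by
  rw [hxy, neg_mul, mul_assoc, hx, mul_neg_one, neg_neg]

theorem one_add_mul_one_add_mul_one_add_of_anticomm (hx : x * x = -1)
    (hxy : x * y = -(y * x)) : (1 + x) * (1 + y) * (1 + x) = 2 • (x + y) := by
  have expand : (1 + x) * (1 + y) * (1 + x)
      = 1 + x + y + x * y + x + x * x + y * x + x * y * x := by noncomm_ring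
  rw [expand, hx, mul_mul_eq_right_of_anticomm hx hxy, hxy]
  abel

theorem one_add_braid_of_anticomm (hx : x * x = -1) (hy : y * y = -1)
    (hxy : x * y = -(y * x)) :
    (1 + x) * (1 + y) * (1 + x) = (1 + y) * (1 + x) * (1 + y) := by
  have hyx : y * x = -(x * y) := by rw [hxy, neg_neg]
  rw [one_add_mul_one_add_mul_one_add_of_anticomm hx hxy,
    one_add_mul_one_add_mul_one_add_of_anticomm hy hyx, add_comm]

theorem Commute.one_add (h : Commute x y) : Commute (1 + x) (1 + y) :=
  (Commute.one_left _).add_left ((Commute.one_right x).add_right h)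

theorem mul_one_add_of_anticomm (hxy : x * y = -(y * x)) : y * (1 + x) = (1 - x) * y := by
  rw [mul_one_add, sub_mul, one_mul, hxy, sub_neg_eq_add]

end Ring

section Acute

variable {n : ℕ} {A : Type*} [Ring A] [Algebra ℝ A] {a : Fin n → A} {i j : Fin n}

theorem acuteEl_braid (hi : a i * a i = -1) (hj : a j * a j = -1)
    (hij : a i * a j = -(a j * a i)) :
    acuteEl a i * acuteEl a j * acuteEl a i = acuteEl a j * acuteEl a i * acuteEl a j := by
  simp only [acuteEl, smul_mul_assoc, mul_smul_comm]
  rw [one_add_braid_of_anticomm hi hj hij]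

theorem Commute.acuteEl (h : Commute (a i) (a j)) : Commute (acuteEl a i) (acuteEl a j) :=
  (h.one_add.smul_left _).smul_right _

theorem mul_acuteEl_of_anticomm (hij : a i * a j = -(a j * a i)) :
    a j * acuteEl a i = graveEl a i * a j := by
  rw [acuteEl, graveEl, mul_smul_comm, smul_mul_assoc, mul_one_add_of_anticomm hij]

end Acute

/-- In the even Clifford algebra with generators `â_i`: the braid relation
`á_i á_{i+1} á_i = á_{i+1} á_i á_{i+1}` holds; `á_i á_j = á_j á_i` for `|i-j| ≠ 1`;
and `â_j á_i = á_i⁻¹ â_j` for `|i-j| = 1` (with `á_i⁻¹ = à_i`). -/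
theorem acute_braid_relations (n : ℕ) (A : Type*) [Ring A] [Algebra ℝ A] (a : Fin n → A)
    (hsq : ∀ i, a i ^ 2 = -1)
    (hcomm : ∀ i j : Fin n, (i : ℕ) + 1 ≠ (j : ℕ) → (j : ℕ) + 1 ≠ (i : ℕ) →
      a i * a j = a j * a i)
    (hanti : ∀ i j : Fin n, ((i : ℕ) + 1 = (j : ℕ) ∨ (j : ℕ) + 1 = (i : ℕ)) →
      a i * a j = -(a j * a i)) :
    (∀ i j : Fin n, (i : ℕ) + 1 = (j : ℕ) →
      acuteEl a i * acuteEl a j * acuteEl a i = acuteEl a j * acuteEl a i * acuteEl a j) ∧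
    (∀ i j : Fin n, (i : ℕ) + 1 ≠ (j : ℕ) → (j : ℕ) + 1 ≠ (i : ℕ) →
      acuteEl a i * acuteEl a j = acuteEl a j * acuteEl a i) ∧
    (∀ i j : Fin n, ((i : ℕ) + 1 = (j : ℕ) ∨ (j : ℕ) + 1 = (i : ℕ)) →
      a j * acuteEl a i = graveEl a i * a j) := by
  have hsq' : ∀ i, a i * a i = -1 := fun i => (sq (a i)).symm.trans (hsq i)
  refine ⟨fun i j hij => ?_, fun i j hij hji => ?_, fun i j hij => ?_⟩
  · exact acuteEl_braid (hsq' i) (hsq' j) (hanti i j (Or.inl hij))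
  · exact Commute.acuteEl (hcomm i j hij hji)
  · exact mul_acuteEl_of_anticomm (hanti i j hij)
end

section
/- Let σ ∈ S_{n+1}, let l = inv(σ) and b = block(σ) be the number of indices j such that σ blocks at j. Then the number of 1-dimensional preancestries of a fixed reduced word for σ equals l - n + b. Equivalently, the number of bounded regions in the wiring diagram of σ (pairs of consecutive crossings on the same row) equals l - n + b. -/
/-!
From `η` no ascent is possible, and `η a_i` ascends only along `a_i`. Hence a preancestry with a
single descent stays at `η`, descends at some position `k₀` to `η a_i` with `i = w[k₀]`, waits
there, and is forced back to `η` at the next occurrence of `i`; it is determined by `k₀`, and it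
exists iff `i` occurs again after `k₀`. There are `l - d` such positions, `d` the number of distinct
letters of `w`. In a reduced word every letter is an ascent, so the number of inversions of the
prefix products crossing the gap between `j` and `j + 1` never decreases and grows at each
occurrence of `j`: the letter `j` occurs in `w` iff `σ` does not block at `j`, so `d = n - b`.
-/

/-- The number of inversions of a permutation. -/
def invCount {m : ℕ} (σ : Equiv.Perm (Fin m)) : ℕ :=
  (Finset.univ.filter fun p : Fin m × Fin m => p.1 < p.2 ∧ σ p.2 < σ p.1).card

/-- The Coxeter generator `a_i`, i.e. the adjacent transposition `(i, i+1)`. -/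
def cox {n : ℕ} (i : Fin n) : Equiv.Perm (Fin (n+1)) :=
  Equiv.swap i.castSucc i.succ

/-- A preancestry for the word `w = a_{i₁}⋯a_{i_l}`: a sequence `(ρ_k)_{0 ≤ k ≤ l}` of
permutations with `ρ₀ = ρ_l = η` (the longest element), each `ρ_k` equal to `ρ_{k-1}` or
`ρ_{k-1} a_{i_k}`, and with the move `ρ_k = ρ_{k-1} a_{i_k}` forced whenever
`ρ_{k-1} a_{i_k} > ρ_{k-1}` (in length). -/
def IsPreancestry {n : ℕ} (w : List (Fin n))
    (ρ : Fin (w.length + 1) → Equiv.Perm (Fin (n+1))) : Prop :=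
  ρ 0 = Fin.revPerm ∧ ρ (Fin.last w.length) = Fin.revPerm ∧
  (∀ k : Fin w.length,
    ρ k.succ = ρ k.castSucc ∨ ρ k.succ = ρ k.castSucc * cox (w.get k)) ∧
  (∀ k : Fin w.length,
    invCount (ρ k.castSucc) < invCount (ρ k.castSucc * cox (w.get k)) →
      ρ k.succ = ρ k.castSucc * cox (w.get k))

/-- The dimension of a preancestry: the number of indices `k` with `ρ_k < ρ_{k-1}`. -/
def preDim {n : ℕ} (w : List (Fin n))
    (ρ : Fin (w.length + 1) → Equiv.Perm (Fin (n+1))) : ℕ :=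
  (Finset.univ.filter fun k : Fin w.length =>
    invCount (ρ k.succ) < invCount (ρ k.castSucc)).card

open Equiv Finset

section Cox
variable {n : ℕ}

lemma val_cox_apply (i : Fin n) (x : Fin (n+1)) :
    (cox i x : ℕ) =
      if (x : ℕ) = i then (i : ℕ) + 1 else if (x : ℕ) = (i : ℕ) + 1 then (i : ℕ) else x := by
  simp only [cox, swap_apply_def, Fin.ext_iff, Fin.val_castSucc, Fin.val_succ]
  split_ifs <;> simp_all

lemma cox_apply_castSucc (i : Fin n) : cox i i.castSucc = i.succ := swap_apply_left _ _

lemma cox_apply_succ (i : Fin n) : cox i i.succ = i.castSucc := swap_apply_right _ _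

lemma cox_apply_cox (i : Fin n) (x : Fin (n+1)) : cox i (cox i x) = x := swap_apply_self _ _ _

lemma cox_mul_self (i : Fin n) : cox i * cox i = 1 := swap_mul_self _ _

lemma cox_ne_one (i : Fin n) : cox i ≠ 1 := by
  intro h
  have := congrArg (· i.castSucc) h
  simp [cox_apply_castSucc, Fin.ext_iff] at this

lemma val_cox_apply_le_iff {i j : Fin n} (hij : i ≠ j) (x : Fin (n+1)) :
    (cox i x : ℕ) ≤ j ↔ (x : ℕ) ≤ j := by
  have := val_cox_apply i x
  have : (i : ℕ) ≠ j := Fin.val_ne_of_ne hij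
  split_ifs at * <;> omega

/-- Relabelling by `cox i` permutes the increasing pairs other than `(i, i+1)`. -/
lemma cox_ne_and_lt_iff (i : Fin n) (a b : Fin (n+1)) :
    ((cox i a, cox i b) ≠ (i.castSucc, i.succ) ∧ cox i a < cox i b) ↔
      ((a, b) ≠ (i.castSucc, i.succ) ∧ a < b) := by
  have ha := val_cox_apply i a
  have hb := val_cox_apply i b
  simp only [ne_eq, Prod.mk.injEq, Fin.ext_iff, Fin.lt_def, Fin.val_castSucc, Fin.val_succ]
  split_ifs at ha hb <;> omega

end Cox

section Inversions
variable {m n : ℕ}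

def inversions (π : Perm (Fin m)) : Finset (Fin m × Fin m) :=
  univ.filter fun p => p.1 < p.2 ∧ π p.2 < π p.1

lemma invCount_eq_card_inversions (π : Perm (Fin m)) : invCount π = #(inversions π) := rfl

lemma inversions_mul_cox_erase (π : Perm (Fin (n+1))) (i : Fin n) :
    (inversions (π * cox i)).erase (i.castSucc, i.succ) =
      ((inversions π).erase (i.castSucc, i.succ)).map (prodCongr (cox i) (cox i)).toEmbedding := by
  ext ⟨a, b⟩
  simp only [mem_map_equiv, mem_erase, inversions, mem_filter, mem_univ, true_and,
    prodCongr_symm, prodCongr_apply, Prod.map]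
  rw [Perm.mul_apply, Perm.mul_apply, show (cox i).symm = cox i from Equiv.symm_swap _ _,
    ← and_assoc, ← and_assoc, cox_ne_and_lt_iff]

lemma invCount_mul_cox_of_lt {π : Perm (Fin (n+1))} {i : Fin n}
    (h : π i.castSucc < π i.succ) : invCount (π * cox i) = invCount π + 1 := by
  have hmem : (i.castSucc, i.succ) ∈ inversions (π * cox i) := by
    simp only [inversions, mem_filter, mem_univ, true_and]
    simpa [Fin.castSucc_lt_succ, cox_apply_castSucc, cox_apply_succ] using h
  have hnot : (i.castSucc, i.succ) ∉ inversions π := by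
    simpa [inversions] using h.le
  rw [invCount_eq_card_inversions, ← card_erase_add_one hmem, inversions_mul_cox_erase,
    card_map, erase_eq_of_notMem hnot, invCount_eq_card_inversions]

lemma invCount_mul_cox_of_gt {π : Perm (Fin (n+1))} {i : Fin n}
    (h : π i.succ < π i.castSucc) : invCount (π * cox i) + 1 = invCount π := by
  have := invCount_mul_cox_of_lt (π := π * cox i) (i := i)
    (by simpa [cox_apply_castSucc, cox_apply_succ] using h)
  rwa [mul_assoc, cox_mul_self, mul_one, eq_comm] at this

lemma apply_castSucc_lt_or_apply_succ_lt (π : Perm (Fin (n+1))) (i : Fin n) :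
    π i.castSucc < π i.succ ∨ π i.succ < π i.castSucc :=
  lt_or_gt_of_ne (π.injective.ne i.castSucc_lt_succ.ne)

lemma invCount_lt_mul_cox_iff {π : Perm (Fin (n+1))} {i : Fin n} :
    invCount π < invCount (π * cox i) ↔ π i.castSucc < π i.succ := by
  rcases apply_castSucc_lt_or_apply_succ_lt π i with h | h
  · simp [h, invCount_mul_cox_of_lt h]
  · simp [h.not_gt, ← invCount_mul_cox_of_gt h]

lemma invCount_mul_cox_lt_iff {π : Perm (Fin (n+1))} {i : Fin n} :
    invCount (π * cox i) < invCount π ↔ π i.succ < π i.castSucc := by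
  rcases apply_castSucc_lt_or_apply_succ_lt π i with h | h
  · simp [h.not_gt, invCount_mul_cox_of_lt h]
  · simp [h, ← invCount_mul_cox_of_gt h]

end Inversions

section Walk
variable {n : ℕ} (w : List (Fin n))

/-- The step conditions of `IsPreancestry`, without the boundary conditions. -/
def IsAdmissible (ρ : Fin (w.length + 1) → Perm (Fin (n+1))) : Prop :=
  (∀ k : Fin w.length,
    ρ k.succ = ρ k.castSucc ∨ ρ k.succ = ρ k.castSucc * cox (w.get k)) ∧
  (∀ k : Fin w.length,
    invCount (ρ k.castSucc) < invCount (ρ k.castSucc * cox (w.get k)) →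
      ρ k.succ = ρ k.castSucc * cox (w.get k))

def descents (ρ : Fin (w.length + 1) → Perm (Fin (n+1))) : Finset (Fin w.length) :=
  univ.filter fun k => invCount (ρ k.succ) < invCount (ρ k.castSucc)

/-- The walk from `π₀` that moves when forced to and, in addition, exactly at the steps in `D`. -/
def walk (π₀ : Perm (Fin (n+1))) (D : Finset (Fin w.length)) :
    Fin (w.length + 1) → Perm (Fin (n+1)) :=
  Fin.induction π₀ fun k π =>
    if k ∈ D ∨ invCount π < invCount (π * cox (w.get k)) then π * cox (w.get k) else π

variable {w}

lemma walk_zero (π₀ : Perm (Fin (n+1))) (D : Finset (Fin w.length)) : walk w π₀ D 0 = π₀ := rfl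

lemma walk_succ (π₀ : Perm (Fin (n+1))) (D : Finset (Fin w.length)) (k : Fin w.length) :
    walk w π₀ D k.succ =
      if k ∈ D ∨ invCount (walk w π₀ D k.castSucc) <
          invCount (walk w π₀ D k.castSucc * cox (w.get k))
      then walk w π₀ D k.castSucc * cox (w.get k) else walk w π₀ D k.castSucc :=
  Fin.induction_succ _ _ k

lemma isAdmissible_walk (π₀ : Perm (Fin (n+1))) (D : Finset (Fin w.length)) :
    IsAdmissible w (walk w π₀ D) := by
  refine ⟨fun k => ?_, fun k h => ?_⟩
  · rw [walk_succ]
    split_ifs <;> simp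
  · rw [walk_succ, if_pos (Or.inr h)]

lemma descents_walk_subset (π₀ : Perm (Fin (n+1))) (D : Finset (Fin w.length)) :
    descents w (walk w π₀ D) ⊆ D := by
  intro k hk
  simp only [descents, mem_filter, mem_univ, true_and, walk_succ] at hk
  by_contra hkD
  split_ifs at hk with h
  · exact (h.resolve_left hkD).asymm hk
  · exact lt_irrefl _ hk

lemma IsAdmissible.eq_walk {ρ : Fin (w.length + 1) → Perm (Fin (n+1))} (hρ : IsAdmissible w ρ) :
    ρ = walk w (ρ 0) (descents w ρ) := by
  funext m
  induction m using Fin.induction with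
  | zero => rfl
  | succ k ih =>
    rw [walk_succ, ← ih]
    rcases hρ.1 k with hstay | hmove
    · have hasc : ¬ invCount (ρ k.castSucc) < invCount (ρ k.castSucc * cox (w.get k)) := by
        intro h
        exact cox_ne_one _ (mul_eq_left.1 ((hρ.2 k h).symm.trans hstay))
      rw [if_neg (not_or.2 ⟨by simp [descents, hstay], hasc⟩), hstay]
    · rw [if_pos, hmove]
      rcases apply_castSucc_lt_or_apply_succ_lt (ρ k.castSucc) (w.get k) with h | h
      · exact Or.inr (invCount_lt_mul_cox_iff.2 h)
      · left
        simpa [descents, hmove] using invCount_mul_cox_lt_iff.2 h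

end Walk

section Occurrences
variable {α : Type*} (w : List α)

def HasLaterOccurrence (k : Fin w.length) : Prop :=
  ∃ m : Fin w.length, k < m ∧ w.get m = w.get k

/-- A walk that leaves `η` at step `k₀` has not yet met the letter `w[k₀]` again before step `m`. -/
def InExcursion (k₀ : Fin w.length) (m : Fin (w.length + 1)) : Prop :=
  (k₀ : ℕ) < m ∧ ∀ k : Fin w.length, k₀ < k → (k : ℕ) < m → w.get k ≠ w.get k₀

instance [DecidableEq α] : DecidablePred (HasLaterOccurrence w) :=
  fun _ => inferInstanceAs (Decidable (∃ _, _))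

instance [DecidableEq α] (k₀ : Fin w.length) : DecidablePred (InExcursion w k₀) :=
  fun _ => inferInstanceAs (Decidable (_ ∧ _))

lemma card_hasLaterOccurrence_add_card_toFinset [DecidableEq α] :
    #{k | HasLaterOccurrence w k} + w.toFinset.card = w.length := by
  induction w with
  | nil => rfl
  | cons a v ih =>
    have hzero : HasLaterOccurrence (a :: v) 0 ↔ a ∈ v := by
      simp [HasLaterOccurrence, Fin.exists_fin_succ, List.mem_iff_get]
    have hsucc (k : Fin v.length) :
        HasLaterOccurrence (a :: v) k.succ ↔ HasLaterOccurrence v k := by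
      simp [HasLaterOccurrence, Fin.exists_fin_succ, Fin.succ_lt_succ_iff]
    rw [show #{k | HasLaterOccurrence (a :: v) k} = #{k : Fin (v.length + 1) | _} from rfl,
      Fin.card_filter_univ_succ', List.toFinset_cons, List.length_cons]
    simp only [hzero, hsucc]
    by_cases ha : a ∈ v
    · rw [if_pos ha, insert_eq_of_mem (List.mem_toFinset.2 ha)]; omega
    · rw [if_neg ha, card_insert_of_notMem (mt List.mem_toFinset.1 ha)]; omega

variable {w}

lemma not_inExcursion_zero (k₀ : Fin w.length) : ¬ InExcursion w k₀ 0 :=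
  fun h => Nat.not_lt_zero _ h.1

lemma inExcursion_succ_iff (k₀ k : Fin w.length) :
    InExcursion w k₀ k.succ ↔ k = k₀ ∨ (InExcursion w k₀ k.castSucc ∧ w.get k ≠ w.get k₀) := by
  simp only [InExcursion, Fin.val_succ, Fin.val_castSucc]
  constructor
  · rintro ⟨hlt, hne⟩
    rcases eq_or_ne k k₀ with rfl | hk
    · exact Or.inl rfl
    · have hk₀k : k₀ < k := by omega
      exact Or.inr ⟨⟨hk₀k, fun m hm hmk => hne m hm (by omega)⟩, hne k hk₀k (by omega)⟩
  · rintro (rfl | ⟨⟨hlt, hne⟩, hk⟩)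
    · exact ⟨by omega, fun m hm hmk => by omega⟩
    · refine ⟨by omega, fun m hm hmk => ?_⟩
      rcases eq_or_ne m k with rfl | hmk'
      · exact hk
      · exact hne m hm (by omega)

lemma inExcursion_last_iff (k₀ : Fin w.length) :
    InExcursion w k₀ (Fin.last _) ↔ ¬ HasLaterOccurrence w k₀ := by
  simp [InExcursion, HasLaterOccurrence, k₀.isLt]

end Occurrences

section LongestElement
variable {n : ℕ}
local notation "η" => (Fin.revPerm : Perm (Fin (n+1)))

lemma invCount_revPerm_mul_cox_lt (i : Fin n) : invCount (η * cox i) < invCount η :=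
  invCount_mul_cox_lt_iff.2 (Fin.rev_lt_rev.2 i.castSucc_lt_succ)

lemma invCount_revPerm_mul_cox_mul_cox_lt {i j : Fin n} (hji : j ≠ i) :
    invCount (η * cox i * cox j) < invCount (η * cox i) := by
  refine invCount_mul_cox_lt_iff.2 (Fin.rev_lt_rev.2 (Fin.lt_def.2 ?_))
  have h₁ := val_cox_apply i j.castSucc
  have h₂ := val_cox_apply i j.succ
  have : (j : ℕ) ≠ i := Fin.val_ne_of_ne hji
  simp only [Fin.val_castSucc, Fin.val_succ] at h₁ h₂
  split_ifs at h₁ h₂ <;> omega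

variable {w : List (Fin n)}

lemma walk_revPerm_singleton_apply (k₀ : Fin w.length) (m : Fin (w.length + 1)) :
    walk w η {k₀} m = if InExcursion w k₀ m then η * cox (w.get k₀) else η := by
  induction m using Fin.induction with
  | zero => simp [walk_zero, not_inExcursion_zero]
  | succ k ih =>
    rw [walk_succ, ih]
    simp only [inExcursion_succ_iff]
    by_cases hexc : InExcursion w k₀ k.castSucc
    · have hk : k ∉ ({k₀} : Finset _) := by
        rw [mem_singleton]; rintro rfl; exact lt_irrefl _ hexc.1
      rw [if_pos hexc]
      by_cases hi : w.get k = w.get k₀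
      · rw [hi, mul_assoc, cox_mul_self, mul_one, if_pos (Or.inr (invCount_revPerm_mul_cox_lt _)),
          if_neg (by rintro (h | h) <;> simp_all)]
      · rw [if_neg (not_or.2 ⟨hk, (invCount_revPerm_mul_cox_mul_cox_lt hi).asymm⟩),
          if_pos (Or.inr ⟨hexc, hi⟩)]
    · rw [if_neg hexc]
      by_cases hk : k = k₀
      · rw [if_pos (Or.inl (mem_singleton.2 hk)), if_pos (Or.inl hk), hk]
      · rw [if_neg (not_or.2 ⟨mt mem_singleton.1 hk, (invCount_revPerm_mul_cox_lt _).asymm⟩),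
          if_neg (by rintro (h | h) <;> simp_all)]

lemma descents_walk_revPerm_singleton (k₀ : Fin w.length) :
    descents w (walk w η {k₀}) = {k₀} := by
  refine (subset_singleton_iff.1 (descents_walk_subset _ _)).resolve_left
    (nonempty_iff_ne_empty.1 ⟨k₀, ?_⟩)
  have hbefore : ¬ InExcursion w k₀ k₀.castSucc := fun h => lt_irrefl _ h.1
  have hafter : InExcursion w k₀ k₀.succ := (inExcursion_succ_iff k₀ k₀).2 (Or.inl rfl)
  simp only [descents, mem_filter, mem_univ, true_and, walk_revPerm_singleton_apply,
    if_pos hafter, if_neg hbefore]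
  exact invCount_revPerm_mul_cox_lt _

/-- One-dimensional preancestries are exactly the walks that leave `η` at a letter that occurs
again later, and return at its next occurrence. -/
lemma isPreancestry_and_preDim_eq_one_iff {ρ : Fin (w.length + 1) → Perm (Fin (n+1))} :
    IsPreancestry w ρ ∧ preDim w ρ = 1 ↔
      ∃ k₀, HasLaterOccurrence w k₀ ∧ ρ = walk w η {k₀} := by
  constructor
  · rintro ⟨⟨hfirst, hlast, hadm⟩, hdim⟩
    obtain ⟨k₀, hk₀⟩ := card_eq_one.1 hdim
    have hρ : ρ = walk w η {k₀} := by
      rw [← hfirst, ← hk₀]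
      exact IsAdmissible.eq_walk hadm
    refine ⟨k₀, ?_, hρ⟩
    by_contra hlater
    rw [hρ, walk_revPerm_singleton_apply, if_pos ((inExcursion_last_iff k₀).2 hlater)] at hlast
    exact cox_ne_one _ (mul_eq_left.1 hlast)
  · rintro ⟨k₀, hk₀, rfl⟩
    refine ⟨⟨rfl, ?_, isAdmissible_walk _ _⟩, ?_⟩
    · rw [walk_revPerm_singleton_apply, if_neg ((inExcursion_last_iff k₀).not.2 (not_not.2 hk₀))]
    · rw [preDim, ← descents, descents_walk_revPerm_singleton, card_singleton]

lemma card_oneDimensional_preancestries :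
    Nat.card {ρ : Fin (w.length + 1) → Perm (Fin (n+1)) // IsPreancestry w ρ ∧ preDim w ρ = 1} =
      #{k | HasLaterOccurrence w k} := by
  rw [← Fintype.card_subtype, ← Nat.card_eq_fintype_card]
  refine (Nat.card_eq_of_bijective
    (fun k => ⟨walk w η {k.1}, isPreancestry_and_preDim_eq_one_iff.2 ⟨k.1, k.2, rfl⟩⟩)
    ⟨fun k k' h => ?_, fun ρ => ?_⟩).symm
  · have := congrArg (descents w ∘ Subtype.val) h
    simp only [Function.comp_apply, descents_walk_revPerm_singleton, singleton_inj] at this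
    exact Subtype.ext this
  · obtain ⟨k, hk, hρ⟩ := isPreancestry_and_preDim_eq_one_iff.1 ρ.2
    exact ⟨⟨k, hk⟩, Subtype.ext hρ.symm⟩

end LongestElement

section Blocks
variable {n : ℕ}

def Blocks (σ : Perm (Fin (n+1))) (j : Fin n) : Prop :=
  ∀ i : Fin (n+1), (i : ℕ) ≤ (j : ℕ) → ((σ i : ℕ) ≤ (j : ℕ))

instance (σ : Perm (Fin (n+1))) : DecidablePred (Blocks σ) :=
  fun _ => inferInstanceAs (Decidable (∀ _, _))

/-- A permutation mapping `{0, …, j}` into itself is a bijection of it, so it also maps the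
complement into itself. -/
lemma Blocks.lt_apply {σ : Perm (Fin (n+1))} {j : Fin n} (h : Blocks σ j) {q : Fin (n+1)}
    (hq : (j : ℕ) < q) : (j : ℕ) < σ q := by
  set S : Set (Fin (n+1)) := {i | (i : ℕ) ≤ j}
  have hbij := (S.toFinite.injOn_iff_bijOn_of_mapsTo (f := σ) h).1 σ.injective.injOn
  simpa [S] using hbij.surjOn.mapsTo_compl σ.injective (show q ∈ Sᶜ by simpa [S] using hq)

def crossCount (j : Fin n) (π : Perm (Fin (n+1))) : ℕ :=
  #{p : Fin (n+1) × Fin (n+1) | (p.1 : ℕ) ≤ j ∧ (j : ℕ) < p.2 ∧ π p.2 < π p.1}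

lemma Blocks.crossCount_eq_zero {σ : Perm (Fin (n+1))} {j : Fin n} (h : Blocks σ j) :
    crossCount j σ = 0 := by
  rw [crossCount, card_eq_zero, filter_eq_empty_iff]
  rintro ⟨p, q⟩ - ⟨hp, hq, hlt⟩
  dsimp only at hp hq hlt
  have := h p hp
  have := h.lt_apply hq
  rw [Fin.lt_def] at hlt
  omega

lemma crossCount_mul_cox_of_ne {i j : Fin n} (hij : i ≠ j) (π : Perm (Fin (n+1))) :
    crossCount j (π * cox i) = crossCount j π := by
  rw [crossCount, crossCount, ← card_map (prodCongr (cox i) (cox i)).toEmbedding]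
  congr 1
  ext ⟨a, b⟩
  simp only [mem_map_equiv, mem_filter, mem_univ, true_and, prodCongr_symm, prodCongr_apply,
    Prod.map, show (cox i).symm = cox i from Equiv.symm_swap _ _]
  have hlt (x : Fin (n+1)) : (j : ℕ) < cox i x ↔ (j : ℕ) < x := by
    simpa using (val_cox_apply_le_iff hij x).not
  rw [Perm.mul_apply, Perm.mul_apply, val_cox_apply_le_iff hij, hlt, cox_apply_cox, cox_apply_cox]

lemma crossCount_lt_mul_cox_self {π : Perm (Fin (n+1))} {j : Fin n}
    (h : π j.castSucc < π j.succ) : crossCount j π < crossCount j (π * cox j) := by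
  refine card_lt_card ((ssubset_iff_of_subset ?_).2 ⟨(j.castSucc, j.succ), ?_, ?_⟩)
  · rintro ⟨p, q⟩ hpq
    simp only [mem_filter, mem_univ, true_and] at hpq ⊢
    obtain ⟨hp, hq, hlt⟩ := hpq
    refine ⟨hp, hq, ?_⟩
    have hp' : p ≠ j.succ := by rintro rfl; simp at hp
    have hq' : q ≠ j.castSucc := by rintro rfl; simp at hq
    rw [Perm.mul_apply, Perm.mul_apply]
    by_cases hpj : p = j.castSucc <;> by_cases hqj : q = j.succ
    · subst hpj hqj; exact absurd hlt h.asymm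
    · rw [hpj, cox_apply_castSucc, cox, swap_apply_of_ne_of_ne hq' hqj]
      exact hlt.trans (hpj ▸ h)
    · rw [hqj, cox_apply_succ, cox, swap_apply_of_ne_of_ne hpj hp']
      exact (hqj ▸ h).trans hlt
    · rwa [cox, swap_apply_of_ne_of_ne hpj hp', swap_apply_of_ne_of_ne hq' hqj]
  · simp only [mem_filter, mem_univ, true_and]
    simpa [cox_apply_castSucc, cox_apply_succ] using h
  · simpa using h.le

lemma crossCount_le_mul_cox {π : Perm (Fin (n+1))} {i : Fin n}
    (h : π i.castSucc < π i.succ) (j : Fin n) : crossCount j π ≤ crossCount j (π * cox i) := by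
  rcases eq_or_ne i j with rfl | hij
  · exact (crossCount_lt_mul_cox_self h).le
  · exact (crossCount_mul_cox_of_ne hij π).ge

end Blocks

section ReducedWords
variable {n : ℕ}

lemma invCount_prod_le_length (v : List (Fin n)) : invCount (v.map cox).prod ≤ v.length := by
  induction v using List.reverseRecOn with
  | nil => simpa [invCount] using fun _ _ => le_of_lt
  | append_singleton v a ih =>
    rw [List.map_append, List.prod_append, List.map_singleton, List.prod_singleton,
      List.length_append, List.length_singleton]
    rcases apply_castSucc_lt_or_apply_succ_lt (v.map cox).prod a with h | h
    · rw [invCount_mul_cox_of_lt h]; omega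
    · have := invCount_mul_cox_of_gt h; omega

variable {v : List (Fin n)}

lemma invCount_prod_eq_length_and_lt_of_append_singleton {a : Fin n}
    (hred : invCount ((v ++ [a]).map cox).prod = (v ++ [a]).length) :
    invCount (v.map cox).prod = v.length ∧
      (v.map cox).prod a.castSucc < (v.map cox).prod a.succ := by
  rw [List.map_append, List.prod_append, List.map_singleton, List.prod_singleton,
    List.length_append, List.length_singleton] at hred
  have hle := invCount_prod_le_length v
  rcases apply_castSucc_lt_or_apply_succ_lt (v.map cox).prod a with h | h
  · rw [invCount_mul_cox_of_lt h] at hred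
    exact ⟨by omega, h⟩
  · have := invCount_mul_cox_of_gt h; omega

lemma crossCount_pos_of_mem (hred : invCount (v.map cox).prod = v.length) {j : Fin n}
    (hj : j ∈ v) : 0 < crossCount j (v.map cox).prod := by
  induction v using List.reverseRecOn with
  | nil => simp at hj
  | append_singleton v a ih =>
    obtain ⟨hred', hasc⟩ := invCount_prod_eq_length_and_lt_of_append_singleton hred
    rw [List.map_append, List.prod_append, List.map_singleton, List.prod_singleton]
    rcases List.mem_append.1 hj with hj | hj
    · exact (ih hred' hj).trans_le (crossCount_le_mul_cox hasc j)
    · rw [List.mem_singleton.1 hj]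
      exact (Nat.zero_le _).trans_lt (crossCount_lt_mul_cox_self hasc)

lemma blocks_prod_of_not_mem {j : Fin n} (hj : j ∉ v) : Blocks (v.map cox).prod j := by
  induction v with
  | nil => simp [Blocks]
  | cons a v ih =>
    intro i hi
    rw [List.map_cons, List.prod_cons, Perm.mul_apply,
      val_cox_apply_le_iff (List.ne_of_not_mem_cons hj).symm]
    exact ih (List.not_mem_of_not_mem_cons hj) i hi

lemma blocks_prod_iff_not_mem (hred : invCount (v.map cox).prod = v.length) (j : Fin n) :
    Blocks (v.map cox).prod j ↔ j ∉ v :=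
  ⟨fun hb hj => (crossCount_pos_of_mem hred hj).ne' hb.crossCount_eq_zero,
    blocks_prod_of_not_mem⟩

lemma card_blocks_add_card_toFinset (hred : invCount (v.map cox).prod = v.length) :
    #{j | Blocks (v.map cox).prod j} + v.toFinset.card = n := by
  have hcompl : ({j | Blocks (v.map cox).prod j} : Finset (Fin n)) = v.toFinsetᶜ := by
    ext j
    simp [blocks_prod_iff_not_mem hred]
  rw [hcompl, card_compl, Fintype.card_fin]
  exact Nat.sub_add_cancel (card_le_univ _ |>.trans_eq (Fintype.card_fin n))

end ReducedWords

/-- For a reduced word `w` of `σ ∈ S_{n+1}` with `l = inv(σ)` letters and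
`b = block(σ)` blocks, the number of preancestries of dimension 1 is `l - n + b`. -/
theorem count_one_dimensional_preancestries (n b : ℕ) (σ : Equiv.Perm (Fin (n+1)))
    (w : List (Fin n))
    (hw : (w.map cox).prod = σ)
    (hred : w.length = invCount σ)
    (hb : b = (Finset.univ.filter fun j : Fin n =>
      ∀ i : Fin (n+1), (i : ℕ) ≤ (j : ℕ) → ((σ i : ℕ) ≤ (j : ℕ))).card) :
    Nat.card {ρ : Fin (w.length + 1) → Equiv.Perm (Fin (n+1)) //
        IsPreancestry w ρ ∧ preDim w ρ = 1} = w.length + b - n := by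
  subst hw
  have hlater := card_hasLaterOccurrence_add_card_toFinset w
  have hblocks : b + w.toFinset.card = n := hb ▸ card_blocks_add_card_toFinset hred.symm
  rw [card_oneDimensional_preancestries]
  omega
end

section
/- For n ≥ 2, let η ∈ S_{n+1} be the longest permutation. The largest possible dimension of a preancestry for η is d_max = ⌊n²/4⌋, and there is a unique preancestry of dimension d_max. -/
/-!
Write a preancestry as `ρ_k = η τ_k π_k` with `π_k = a_{i₁} ⋯ a_{i_k}`. A move leaves the twist
`τ_k` unchanged, while a stay multiplies it by `t_k = π_k a_{i_k} π_k⁻¹`, the transposition of the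
two values exchanged by the `k`-th letter; as the word is reduced, every transposition `(b c)`
occurs exactly once among the `t_k`. Since `τ_0 = 1` and `τ_l = η`, the involution `η` is a product
of the stay transpositions, so the vectors `e_x - e_{η x}` lie in the span of the corresponding
`e_b - e_c`: there are at least `⌊(n+1)/2⌋` stays, and exactly that many only if every stay
transposition is of the form `(x, η x)`. Because `ρ_0 = ρ_l`, ascents and descents are equally
many, so `2 · dim + #stays = n(n+1)/2`, which gives `dim ≤ ⌊n²/4⌋`. Staying exactly at the steps
with `t_k = (x, η x)` is a preancestry (each of these steps is a descent), and a preancestry is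
determined by its set of stays.
-/

lemma Fin.sum_univ_succ_sub_castSucc {M : Type*} [AddCommGroup M] {l : ℕ}
    (f : Fin (l + 1) → M) : ∑ k : Fin l, (f k.succ - f k.castSucc) = f (Fin.last l) - f 0 := by
  induction l with
  | zero => simp
  | succ l ih =>
    rw [Fin.sum_univ_castSucc]
    simp only [Fin.succ_castSucc, ih (fun k => f k.castSucc), Fin.succ_last, Fin.castSucc_zero]
    abel

namespace Preancestry

open Equiv Finset Submodule

section EdgeVectors

variable {α : Type*}

def edgeVec [DecidableEq α] (p : α × α) : α → ℚ := Pi.single p.1 1 - Pi.single p.2 1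

def swapClosure [DecidableEq α] (E : Set (α × α)) : Submonoid (Perm α) :=
  Submonoid.closure ((fun p : α × α => swap p.1 p.2) '' E)

lemma edgeVec_mem_span_of_mem_swapClosure [DecidableEq α] {E : Set (α × α)} {τ : Perm α}
    (hτ : τ ∈ swapClosure E) (x : α) : edgeVec (x, τ x) ∈ span ℚ (edgeVec '' E) := by
  induction hτ using Submonoid.closure_induction generalizing x with
  | mem σ hσ =>
    obtain ⟨⟨a, b⟩, hab, rfl⟩ := hσ
    have hmem : edgeVec (a, b) ∈ span ℚ (edgeVec '' E) := subset_span ⟨_, hab, rfl⟩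
    rcases eq_or_ne x a with rfl | hxa
    · simpa using hmem
    rcases eq_or_ne x b with rfl | hxb
    · have : edgeVec (x, a) = -edgeVec (a, x) := by simp [edgeVec]
      simpa [this] using neg_mem hmem
    · simp [swap_apply_of_ne_of_ne hxa hxb, edgeVec]
  | one => simp [edgeVec]
  | mul σ τ _ _ hσ hτ =>
    have : edgeVec (x, (σ * τ) x) = edgeVec (x, τ x) + edgeVec (τ x, σ (τ x)) := by
      simp [edgeVec]
    rw [this]
    exact add_mem (hτ x) (hσ (τ x))

variable [LinearOrder α] {r : Perm α}

def pairSpan (r : Perm α) : Submodule ℚ (α → ℚ) :=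
  span ℚ (Set.range fun j : {j // j < r j} => edgeVec (j.1, r j.1))

lemma apply_eq_neg_of_mem_pairSpan (hr : Function.Involutive r) {v : α → ℚ}
    (hv : v ∈ pairSpan r) (x : α) : v (r x) = -v x := by
  induction hv using span_induction with
  | mem v hv =>
    obtain ⟨j, rfl⟩ := hv
    simp only [edgeVec, Pi.sub_apply, Pi.single_apply, hr.eq_iff, hr j.1]
    ring
  | zero => simp
  | add u v _ _ hu hv => simp [hu, hv]; ring
  | smul c v _ hv => simp [hv]

lemma linearIndependent_edgeVec_involution (hr : Function.Involutive r) :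
    LinearIndependent ℚ fun j : {j // j < r j} => edgeVec (j.1, r j.1) := by
  rw [linearIndependent_iff']
  intro s g hsum j hj
  have hcoord (i : {j // j < r j}) : edgeVec (i.1, r i.1) j.1 = if i = j then 1 else 0 := by
    have hne : r i.1 ≠ j.1 := fun h =>
      lt_asymm (h ▸ i.2 : i.1 < j.1) (j.2.trans_eq (hr.eq_iff.1 h).symm)
    simp [edgeVec, Pi.single_apply, Subtype.ext_iff, hne, eq_comm]
  simpa [hcoord, hj] using congrFun hsum j.1

variable [Fintype α] {E : Finset (α × α)}

lemma pairSpan_le_span (hE : r ∈ swapClosure (E : Set (α × α))) :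
    pairSpan r ≤ span ℚ (E.image edgeVec) := by
  rw [pairSpan, span_le, coe_image]
  rintro _ ⟨j, rfl⟩
  exact edgeVec_mem_span_of_mem_swapClosure hE j.1

lemma finrank_pairSpan (hr : Function.Involutive r) :
    Module.finrank ℚ (pairSpan r) = Fintype.card {j // j < r j} :=
  finrank_span_eq_card (linearIndependent_edgeVec_involution hr)

lemma finrank_span_edgeVec_le : Module.finrank ℚ (span ℚ (E.image edgeVec : Set (α → ℚ))) ≤ #E :=
  (finrank_span_finset_le_card _).trans card_image_le

lemma card_lt_involution_le_card (hr : Function.Involutive r)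
    (hE : r ∈ swapClosure (E : Set (α × α))) : Fintype.card {j // j < r j} ≤ #E :=
  calc Fintype.card {j // j < r j} = Module.finrank ℚ (pairSpan r) := (finrank_pairSpan hr).symm
    _ ≤ Module.finrank ℚ (span ℚ (E.image edgeVec : Set (α → ℚ))) :=
      finrank_mono (pairSpan_le_span hE)
    _ ≤ #E := finrank_span_edgeVec_le

lemma snd_eq_of_card_le_card_lt_involution (hr : Function.Involutive r)
    (hE : r ∈ swapClosure (E : Set (α × α))) (hcard : #E ≤ Fintype.card {j // j < r j})
    {p : α × α} (hp : p ∈ E) (hne : p.1 ≠ p.2) : p.2 = r p.1 := by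
  have hspan : pairSpan r = span ℚ (E.image edgeVec) :=
    eq_of_le_of_finrank_le (pairSpan_le_span hE)
      (finrank_span_edgeVec_le.trans (hcard.trans_eq (finrank_pairSpan hr).symm))
  have hv : edgeVec p ∈ pairSpan r := hspan ▸ subset_span (mem_coe.2 (mem_image_of_mem _ hp))
  have h1 : edgeVec p p.1 = 1 := by simp [edgeVec, hne]
  by_contra h
  have h2 : edgeVec p (r p.1) ≠ -1 := by
    simp only [edgeVec, Pi.sub_apply, Pi.single_apply, Ne.symm h, if_false]
    split_ifs <;> norm_num
  exact h2 (by rw [apply_eq_neg_of_mem_pairSpan hr hv, h1])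

end EdgeVectors

section Permutations

variable {n : ℕ}

lemma revPerm_inv {m : ℕ} : (Fin.revPerm : Perm (Fin m))⁻¹ = Fin.revPerm := rfl

lemma revPerm_mul_revPerm {m : ℕ} : (Fin.revPerm : Perm (Fin m)) * Fin.revPerm = 1 := by
  ext; simp

lemma card_lt_revPerm : Fintype.card {j : Fin (n+1) // j < Fin.revPerm j} = (n+1)/2 := by
  have h (j : Fin (n+1)) : j < Fin.revPerm j ↔ (j : ℕ) < (n+1)/2 := by
    rw [Fin.revPerm_apply, Fin.lt_def, Fin.val_rev]; omega
  simp_rw [Fintype.card_subtype, h]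
  rw [Fin.card_filter_val_lt]
  omega

lemma cox_inv (i : Fin n) : (cox i)⁻¹ = cox i := swap_inv _ _

lemma mul_cox_ne (σ : Perm (Fin (n+1))) (i : Fin n) : σ * cox i ≠ σ := by
  intro h
  have := congrArg (· i.castSucc) h
  simp [cox, swap_apply_left, σ.injective.eq_iff, Fin.castSucc_lt_succ.ne'] at this

lemma cox_apply_lt_cox_apply_iff (i : Fin n) (p q : Fin (n+1)) :
    cox i p < cox i q ↔
      (p < q ∧ ¬(p = i.castSucc ∧ q = i.succ)) ∨ (p = i.succ ∧ q = i.castSucc) := by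
  have h1 : (i.castSucc : Fin (n+1)).val = i.val := rfl
  have h2 : (i.succ : Fin (n+1)).val = i.val + 1 := rfl
  simp only [cox, swap_apply_def, Fin.lt_def, Fin.ext_iff, h1, h2]
  split_ifs <;> omega

/-- The inversions of `σ⁻¹`: unlike the inversions of `σ`, they change under `σ ↦ σ * cox i`
only by the pair of values `σ` puts at `i` and `i + 1`. -/
def leftInvSet {m : ℕ} (σ : Perm (Fin m)) : Finset (Fin m × Fin m) :=
  {p | p.1 < p.2 ∧ σ⁻¹ p.2 < σ⁻¹ p.1}

lemma invCount_eq_card_leftInvSet {m : ℕ} (σ : Perm (Fin m)) :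
    invCount σ = #(leftInvSet σ) := by
  refine card_bij (fun p _ => (σ p.2, σ p.1)) ?_ ?_ ?_
  · simp +contextual [leftInvSet]
  · simp +contextual [Prod.ext_iff]
  · rintro ⟨p, q⟩ h
    refine ⟨(σ⁻¹ q, σ⁻¹ p), ?_, by simp⟩
    simp_all [leftInvSet]

lemma leftInvSet_mul_cox {σ : Perm (Fin (n+1))} {i : Fin n} (h : σ i.castSucc < σ i.succ) :
    leftInvSet (σ * cox i) = insert (σ i.castSucc, σ i.succ) (leftInvSet σ) := by
  ext ⟨p, q⟩
  obtain ⟨P, rfl⟩ := σ.surjective p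
  obtain ⟨Q, rfl⟩ := σ.surjective q
  simp only [leftInvSet, mem_filter, mem_insert, mem_univ, true_and, mul_inv_rev, cox_inv,
    Perm.mul_apply, Prod.mk.injEq, σ.injective.eq_iff, cox_apply_lt_cox_apply_iff]
  simp only [Perm.inv_def, symm_apply_apply]
  constructor
  · rintro ⟨hPQ, (⟨hlt, -⟩ | ⟨rfl, rfl⟩)⟩
    · exact Or.inr ⟨hPQ, hlt⟩
    · exact Or.inl ⟨rfl, rfl⟩
  · rintro (⟨rfl, rfl⟩ | ⟨hPQ, hlt⟩)
    · exact ⟨h, Or.inr ⟨rfl, rfl⟩⟩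
    · refine ⟨hPQ, Or.inl ⟨hlt, ?_⟩⟩
      rintro ⟨rfl, rfl⟩
      exact hPQ.not_gt h

lemma apply_castSucc_succ_notMem_leftInvSet (σ : Perm (Fin (n+1))) (i : Fin n) :
    (σ i.castSucc, σ i.succ) ∉ leftInvSet σ := by
  simp [leftInvSet, Fin.castSucc_lt_succ.le]

lemma invCount_mul_cox_of_lt {σ : Perm (Fin (n+1))} {i : Fin n}
    (h : σ i.castSucc < σ i.succ) : invCount (σ * cox i) = invCount σ + 1 := by
  rw [invCount_eq_card_leftInvSet, invCount_eq_card_leftInvSet, leftInvSet_mul_cox h,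
    card_insert_of_notMem (apply_castSucc_succ_notMem_leftInvSet σ i)]

lemma invCount_mul_cox_of_gt {σ : Perm (Fin (n+1))} {i : Fin n}
    (h : σ i.succ < σ i.castSucc) : invCount σ = invCount (σ * cox i) + 1 := by
  have h' : (σ * cox i) i.castSucc < (σ * cox i) i.succ := by
    simpa [cox, swap_apply_left, swap_apply_right] using h
  simpa [mul_assoc, cox] using invCount_mul_cox_of_lt h'

lemma invCount_mul_cox (σ : Perm (Fin (n+1))) (i : Fin n) :
    invCount (σ * cox i) = invCount σ + 1 ∨ invCount σ = invCount (σ * cox i) + 1 := by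
  rcases lt_or_gt_of_ne (σ.injective.ne (Fin.castSucc_lt_succ (i := i)).ne) with h | h
  · exact Or.inl (invCount_mul_cox_of_lt h)
  · exact Or.inr (invCount_mul_cox_of_gt h)

lemma invCount_one {m : ℕ} : invCount (1 : Perm (Fin m)) = 0 := by
  rw [invCount, card_eq_zero, filter_eq_empty_iff]
  exact fun _ _ h => lt_asymm h.1 h.2

lemma invCount_revPerm : invCount (Fin.revPerm : Perm (Fin (n+1))) = (n+1).choose 2 := by
  rw [← Fintype.card_fin (n+1), ← Fintype.card_product_filter_lt, Fintype.card_fin]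
  simp [invCount, Fin.rev_lt_rev, and_self]

lemma choose_two_succ (N : ℕ) : (N + 1).choose 2 = 2 * (N ^ 2 / 4) + (N + 1) / 2 := by
  rw [Nat.choose_two_right, Nat.add_sub_cancel]
  obtain ⟨a, rfl | rfl⟩ := Nat.even_or_odd' N
  · have h1 : (2 * a + 1) * (2 * a) = 2 * (2 * (a * a) + a) := by ring
    have h2 : (2 * a) ^ 2 = 4 * (a * a) := by ring
    rw [h1, h2]
    omega
  · have h1 : (2 * a + 1 + 1) * (2 * a + 1) = 2 * (2 * (a * a) + 3 * a + 1) := by ring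
    have h2 : (2 * a + 1) ^ 2 = 4 * (a * a + a) + 1 := by ring
    rw [h1, h2]
    omega

end Permutations

section ReducedWord

variable {n : ℕ} (w : List (Fin n))

def prefixProd (k : ℕ) : Perm (Fin (n+1)) := ((w.map cox).take k).prod

lemma prefixProd_zero : prefixProd w 0 = 1 := rfl

lemma prefixProd_succ (k : Fin w.length) :
    prefixProd w (k + 1) = prefixProd w k * cox (w.get k) := by
  rw [prefixProd, List.prod_take_succ _ _ (by simp)]
  simp [prefixProd]

lemma prefixProd_length : prefixProd w w.length = (w.map cox).prod := by
  rw [prefixProd, List.take_of_length_le (by simp)]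

def inversionPair (k : Fin w.length) : Fin (n+1) × Fin (n+1) :=
  (prefixProd w k (w.get k).castSucc, prefixProd w k (w.get k).succ)

lemma swap_inversionPair (k : Fin w.length) :
    swap (inversionPair w k).1 (inversionPair w k).2 =
      prefixProd w k * cox (w.get k) * (prefixProd w k)⁻¹ :=
  swap_apply_apply _ _ _

lemma inversionPair_fst_ne_snd (k : Fin w.length) :
    (inversionPair w k).1 ≠ (inversionPair w k).2 :=
  (prefixProd w k).injective.ne Fin.castSucc_lt_succ.ne

def orbitSteps : Finset (Fin w.length) :=
  {k | (inversionPair w k).2 = (inversionPair w k).1.rev}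

@[simp]
lemma mem_orbitSteps {k : Fin w.length} :
    k ∈ orbitSteps w ↔ (inversionPair w k).2 = (inversionPair w k).1.rev := by
  simp [orbitSteps]

lemma invCount_prefixProd_add_le (j k : ℕ) (h : j + k ≤ w.length) :
    invCount (prefixProd w (j + k)) ≤ invCount (prefixProd w j) + k := by
  induction k with
  | zero => simp
  | succ k ih =>
    have := prefixProd_succ w ⟨j + k, by omega⟩
    have := invCount_mul_cox (prefixProd w (j + k)) (w.get ⟨j + k, by omega⟩)
    grind

variable {w} (hw : (w.map cox).prod = Fin.revPerm)
  (hred : w.length = invCount (Fin.revPerm : Perm (Fin (n+1))))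
include hw hred

lemma invCount_prefixProd {k : ℕ} (hk : k ≤ w.length) : invCount (prefixProd w k) = k := by
  have hle := invCount_prefixProd_add_le w 0 k (by omega)
  have hge := invCount_prefixProd_add_le w k (w.length - k) (by omega)
  rw [Nat.add_sub_cancel' hk, prefixProd_length, hw, ← hred] at hge
  simp only [zero_add, prefixProd_zero, invCount_one] at hle
  omega

lemma inversionPair_fst_lt_snd (k : Fin w.length) :
    (inversionPair w k).1 < (inversionPair w k).2 := by
  rcases lt_or_gt_of_ne ((prefixProd w k).injective.ne
    (Fin.castSucc_lt_succ (i := w.get k)).ne) with h | h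
  · exact h
  have := invCount_mul_cox_of_gt h
  rw [← prefixProd_succ, invCount_prefixProd hw hred k.isLt.le,
    invCount_prefixProd hw hred k.isLt] at this
  omega

lemma inversionPair_mem_leftInvSet {j : Fin w.length} {m : ℕ} (hjm : j < m)
    (hm : m ≤ w.length) : inversionPair w j ∈ leftInvSet (prefixProd w m) := by
  induction m with
  | zero => omega
  | succ m ih =>
    have hasc := inversionPair_fst_lt_snd hw hred ⟨m, hm⟩
    rw [prefixProd_succ w ⟨m, hm⟩, leftInvSet_mul_cox hasc, mem_insert]
    rcases Nat.lt_succ_iff_lt_or_eq.1 hjm with h | h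
    · exact Or.inr (ih h (by omega))
    · exact Or.inl (by rw [show j = ⟨m, hm⟩ from Fin.ext h]; rfl)

lemma inversionPair_injective : Function.Injective (inversionPair w) :=
  .of_lt_imp_ne fun _ k hjk h => apply_castSucc_succ_notMem_leftInvSet _ _
    (h ▸ inversionPair_mem_leftInvSet hw hred hjk k.isLt.le)

lemma exists_inversionPair_eq {b c : Fin (n+1)} (hbc : b < c) :
    ∃ k, inversionPair w k = (b, c) := by
  let f (k : Fin w.length) : {p : Fin (n+1) × Fin (n+1) // p.1 < p.2} :=
    ⟨inversionPair w k, inversionPair_fst_lt_snd hw hred k⟩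
  have hf : Function.Bijective f := by
    rw [Fintype.bijective_iff_injective_and_card]
    refine ⟨fun j k h => inversionPair_injective hw hred (congrArg Subtype.val h), ?_⟩
    rw [Fintype.card_fin, hred, invCount_revPerm, Fintype.card_subtype,
      Fintype.card_product_filter_lt, Fintype.card_fin]
  obtain ⟨k, hk⟩ := hf.2 ⟨(b, c), hbc⟩
  exact ⟨k, congrArg Subtype.val hk⟩

end ReducedWord

section Preancestries

variable {n : ℕ}

def staySteps {G : Type*} [DecidableEq G] {l : ℕ} (ρ : Fin (l + 1) → G) : Finset (Fin l) :=
  {k | ρ k.succ = ρ k.castSucc}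

@[simp]
lemma mem_staySteps {G : Type*} [DecidableEq G] {l : ℕ} {ρ : Fin (l + 1) → G} {k : Fin l} :
    k ∈ staySteps ρ ↔ ρ k.succ = ρ k.castSucc := by
  simp [staySteps]

variable {w : List (Fin n)} {ρ : Fin (w.length + 1) → Perm (Fin (n+1))}

lemma succ_eq_mul_cox_of_notMem_staySteps (hρ : IsPreancestry w ρ) {k : Fin w.length}
    (hk : k ∉ staySteps ρ) : ρ k.succ = ρ k.castSucc * cox (w.get k) :=
  (hρ.2.2.1 k).resolve_left (mem_staySteps.not.1 hk)

lemma two_mul_preDim_add_card_staySteps (hρ : IsPreancestry w ρ) :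
    2 * preDim w ρ + (staySteps ρ).card = w.length := by
  let f (k : Fin (w.length + 1)) : ℤ := invCount (ρ k)
  -- a step changes `invCount` by `-1`, `0` or `1` according as it is a descent, a stay or an ascent
  have hstep (k : Fin w.length) :
      2 * (if invCount (ρ k.succ) < invCount (ρ k.castSucc) then 1 else 0) +
        (if k ∈ staySteps ρ then 1 else 0) = 1 - (f k.succ - f k.castSucc) := by
    by_cases hk : k ∈ staySteps ρ
    · simp [f, mem_staySteps.1 hk]
    · rcases invCount_mul_cox (ρ k.castSucc) (w.get k) with h | h <;>
        simp only [f, hk, if_false, succ_eq_mul_cox_of_notMem_staySteps hρ hk, h] <;>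
        split_ifs <;> omega
  have hsum := Finset.sum_congr rfl fun k (_ : k ∈ univ) => hstep k
  rw [sum_add_distrib, ← mul_sum, sum_boole, sum_boole, sum_sub_distrib,
    Fin.sum_univ_succ_sub_castSucc] at hsum
  simp only [f, hρ.1, hρ.2.1] at hsum
  simp only [sub_self, sub_zero, sum_const, card_univ, Fintype.card_fin, nsmul_eq_mul, mul_one,
    filter_mem_eq_inter, univ_inter] at hsum
  exact_mod_cast hsum

lemma eq_of_staySteps_eq {ρ' : Fin (w.length + 1) → Perm (Fin (n+1))} (hρ : IsPreancestry w ρ)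
    (hρ' : IsPreancestry w ρ') (h : staySteps ρ = staySteps ρ') : ρ = ρ' := by
  funext k
  induction k using Fin.induction with
  | zero => rw [hρ.1, hρ'.1]
  | succ k ih =>
    by_cases hk : k ∈ staySteps ρ
    · rw [mem_staySteps.1 hk, mem_staySteps.1 (show k ∈ staySteps ρ' from h ▸ hk), ih]
    · rw [succ_eq_mul_cox_of_notMem_staySteps hρ hk,
        succ_eq_mul_cox_of_notMem_staySteps hρ' (h ▸ hk), ih]

lemma revPerm_mem_swapClosure_inversionPair
    (hw : (w.map cox).prod = Fin.revPerm) (hρ : IsPreancestry w ρ) :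
    (Fin.revPerm : Perm (Fin (n+1))) ∈ swapClosure ↑((staySteps ρ).image (inversionPair w)) := by
  set M : Submonoid (Perm (Fin (n+1))) := swapClosure ↑((staySteps ρ).image (inversionPair w))
  have htwist (k : Fin (w.length + 1)) : Fin.revPerm⁻¹ * ρ k * (prefixProd w k)⁻¹ ∈ M := by
    induction k using Fin.induction with
    | zero => simp [hρ.1, prefixProd_zero]
    | succ k ih =>
      simp only [Fin.val_succ, Fin.val_castSucc] at ih ⊢
      rw [prefixProd_succ]
      by_cases hk : k ∈ staySteps ρ
      · have hgen : swap (inversionPair w k).1 (inversionPair w k).2 ∈ M :=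
          Submonoid.subset_closure ⟨_, mem_coe.2 (mem_image_of_mem _ hk), rfl⟩
        rw [swap_inversionPair] at hgen
        convert mul_mem ih hgen using 1
        rw [mem_staySteps.1 hk, mul_inv_rev, cox_inv]
        group
      · convert ih using 1
        rw [succ_eq_mul_cox_of_notMem_staySteps hρ hk, mul_inv_rev, cox_inv]
        simp only [mul_assoc, cox, swap_mul_self_mul]
  simpa [hρ.2.1, prefixProd_length, hw, revPerm_inv, revPerm_mul_revPerm, ← mul_assoc]
    using htwist (Fin.last _)

variable (hw : (w.map cox).prod = Fin.revPerm) (hρ : IsPreancestry w ρ)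
include hw hρ

lemma card_staySteps_ge : (n+1)/2 ≤ (staySteps ρ).card :=
  calc (n+1)/2 = Fintype.card {j : Fin (n+1) // j < Fin.revPerm j} := card_lt_revPerm.symm
    _ ≤ ((staySteps ρ).image (inversionPair w)).card :=
      card_lt_involution_le_card Fin.rev_involutive
        (revPerm_mem_swapClosure_inversionPair hw hρ)
    _ ≤ (staySteps ρ).card := card_image_le

lemma staySteps_subset_orbitSteps (hcard : (staySteps ρ).card ≤ (n+1)/2) :
    staySteps ρ ⊆ orbitSteps w := fun k hk =>
  (mem_orbitSteps w).2 <| snd_eq_of_card_le_card_lt_involution Fin.rev_involutive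
    (revPerm_mem_swapClosure_inversionPair hw hρ)
    (card_image_le.trans (hcard.trans_eq card_lt_revPerm.symm)) (mem_image_of_mem _ hk)
    (inversionPair_fst_ne_snd w k)

end Preancestries

section MaxPreancestry

variable {n : ℕ} (w : List (Fin n))

def IsDone (m : ℕ) (x : Fin (n+1)) : Prop :=
  ∃ k : Fin w.length, (k : ℕ) < m ∧
    (inversionPair w k = (x, x.rev) ∨ inversionPair w k = (x.rev, x))

lemma isDone_rev {m : ℕ} {x : Fin (n+1)} : IsDone w m x.rev ↔ IsDone w m x := by
  simp only [IsDone, Fin.rev_rev, or_comm]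

lemma isDone_succ_iff (k : Fin w.length) {x : Fin (n+1)} :
    IsDone w (k + 1) x ↔
      IsDone w k x ∨ inversionPair w k = (x, x.rev) ∨ inversionPair w k = (x.rev, x) := by
  constructor
  · rintro ⟨j, hj, h⟩
    rcases Nat.lt_succ_iff_lt_or_eq.1 hj with hj | hj
    · exact Or.inl ⟨j, hj, h⟩
    · exact Or.inr (Fin.ext hj ▸ h)
  · rintro (⟨j, hj, h⟩ | h)
    · exact ⟨j, hj.trans k.val.lt_succ_self, h⟩
    · exact ⟨k, k.val.lt_succ_self, h⟩

open Classical in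
/-- The product of the transpositions `(x, x.rev)` of the orbit steps before `m`. -/
noncomputable def orbitTwist (m : ℕ) : Perm (Fin (n+1)) :=
  Function.Involutive.toPerm (fun x => if IsDone w m x then x.rev else x) fun x => by
    by_cases h : IsDone w m x <;> simp [h, isDone_rev]

open Classical in
lemma orbitTwist_apply (m : ℕ) (x : Fin (n+1)) :
    orbitTwist w m x = if IsDone w m x then x.rev else x := rfl

lemma orbitTwist_zero : orbitTwist w 0 = 1 := by
  ext x
  simp [orbitTwist_apply, IsDone]

lemma orbitTwist_succ_of_notMem {k : Fin w.length} (hk : k ∉ orbitSteps w) :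
    orbitTwist w (k + 1) = orbitTwist w k := by
  ext x
  have : ¬(inversionPair w k = (x, x.rev) ∨ inversionPair w k = (x.rev, x)) := by
    rintro (h | h) <;> simp [h] at hk
  classical
  simp only [orbitTwist_apply, isDone_succ_iff, this, or_false]

noncomputable def maxPreancestry (k : Fin (w.length + 1)) : Perm (Fin (n+1)) :=
  Fin.revPerm * orbitTwist w k * prefixProd w k

lemma maxPreancestry_succ_of_notMem {k : Fin w.length} (hk : k ∉ orbitSteps w) :
    maxPreancestry w k.succ = maxPreancestry w k.castSucc * cox (w.get k) := by
  simp only [maxPreancestry, Fin.val_succ, Fin.val_castSucc, orbitTwist_succ_of_notMem w hk,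
    prefixProd_succ, mul_assoc]

variable {w} (hw : (w.map cox).prod = Fin.revPerm)
  (hred : w.length = invCount (Fin.revPerm : Perm (Fin (n+1))))
include hw hred

lemma not_isDone_of_mem_orbitSteps {k : Fin w.length} (hk : k ∈ orbitSteps w) :
    ¬IsDone w k (inversionPair w k).1 := by
  rintro ⟨j, hjk, h | h⟩
  · rw [← (mem_orbitSteps w).1 hk] at h
    exact hjk.ne (congrArg Fin.val (inversionPair_injective hw hred h))
  · have hj := inversionPair_fst_lt_snd hw hred j
    have hk' := inversionPair_fst_lt_snd hw hred k
    rw [h] at hj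
    rw [(mem_orbitSteps w).1 hk] at hk'
    exact lt_asymm hj hk'

lemma orbitTwist_succ_of_mem {k : Fin w.length} (hk : k ∈ orbitSteps w) :
    orbitTwist w (k + 1) =
      orbitTwist w k * swap (inversionPair w k).1 (inversionPair w k).2 := by
  have hpair : inversionPair w k = ((inversionPair w k).1, (inversionPair w k).1.rev) :=
    Prod.ext rfl ((mem_orbitSteps w).1 hk)
  set b := (inversionPair w k).1
  have hb : ¬IsDone w k b := not_isDone_of_mem_orbitSteps hw hred hk
  have hb' : ¬IsDone w k b.rev := (isDone_rev w).not.2 hb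
  ext x
  classical
  simp only [Perm.mul_apply, orbitTwist_apply, isDone_succ_iff, hpair]
  by_cases hxb : x = b
  · simp [hxb, hb']
  by_cases hxc : x = b.rev
  · simp [hxc, hb]
  simp [swap_apply_of_ne_of_ne hxb hxc, Ne.symm hxb, Ne.symm hxc]

lemma orbitTwist_length : orbitTwist w w.length = Fin.revPerm := by
  refine Equiv.ext fun x => ?_
  rw [orbitTwist_apply, Fin.revPerm_apply]
  split_ifs with hx
  · rfl
  rcases lt_trichotomy x x.rev with h | h | h
  · obtain ⟨k, hk⟩ := exists_inversionPair_eq hw hred h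
    exact absurd ⟨k, k.isLt, Or.inl hk⟩ hx
  · exact h
  · obtain ⟨k, hk⟩ := exists_inversionPair_eq hw hred h
    exact absurd ⟨k, k.isLt, Or.inr hk⟩ hx

lemma maxPreancestry_succ_of_mem {k : Fin w.length} (hk : k ∈ orbitSteps w) :
    maxPreancestry w k.succ = maxPreancestry w k.castSucc := by
  simp only [maxPreancestry, Fin.val_succ, Fin.val_castSucc, orbitTwist_succ_of_mem hw hred hk,
    prefixProd_succ, swap_inversionPair]
  simp [mul_assoc, cox]

lemma maxPreancestry_apply_succ_lt {k : Fin w.length} (hk : k ∈ orbitSteps w) :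
    maxPreancestry w k.castSucc (w.get k).succ <
      maxPreancestry w k.castSucc (w.get k).castSucc := by
  have hb := not_isDone_of_mem_orbitSteps hw hred hk
  have hb' := (isDone_rev w).not.2 hb
  have hsnd := (mem_orbitSteps w).1 hk
  have hlt := inversionPair_fst_lt_snd hw hred k
  change Fin.revPerm (orbitTwist w k (inversionPair w k).2) <
    Fin.revPerm (orbitTwist w k (inversionPair w k).1)
  rwa [hsnd, orbitTwist_apply, orbitTwist_apply, if_neg hb, if_neg hb', Fin.revPerm_apply,
    Fin.revPerm_apply, Fin.rev_rev, ← hsnd]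

lemma isPreancestry_maxPreancestry : IsPreancestry w (maxPreancestry w) := by
  refine ⟨?_, ?_, fun k => ?_, fun k hasc => ?_⟩
  · simp [maxPreancestry, orbitTwist_zero, prefixProd_zero]
  · simp [maxPreancestry, orbitTwist_length hw hred, prefixProd_length, hw, revPerm_mul_revPerm]
  · by_cases hk : k ∈ orbitSteps w
    · exact Or.inl (maxPreancestry_succ_of_mem hw hred hk)
    · exact Or.inr (maxPreancestry_succ_of_notMem w hk)
  · by_cases hk : k ∈ orbitSteps w
    · have := invCount_mul_cox_of_gt (maxPreancestry_apply_succ_lt hw hred hk)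
      omega
    · exact maxPreancestry_succ_of_notMem w hk

lemma staySteps_maxPreancestry : staySteps (maxPreancestry w) = orbitSteps w := by
  ext k
  rw [mem_staySteps]
  refine ⟨fun h => ?_, maxPreancestry_succ_of_mem hw hred⟩
  by_contra hk
  exact mul_cox_ne _ _ (h ▸ maxPreancestry_succ_of_notMem w hk).symm

lemma card_orbitSteps : #(orbitSteps w) = (n+1)/2 := by
  rw [← card_lt_revPerm, Fintype.card_subtype]
  refine card_bij (fun k _ => (inversionPair w k).1) (fun k hk => ?_) (fun j hj k hk h => ?_)
    (fun x hx => ?_)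
  · rw [mem_filter, Fin.revPerm_apply, ← (mem_orbitSteps w).1 hk]
    exact ⟨mem_univ _, inversionPair_fst_lt_snd hw hred k⟩
  · refine inversionPair_injective hw hred (Prod.ext h ?_)
    rw [(mem_orbitSteps w).1 hj, (mem_orbitSteps w).1 hk, h]
  · rw [mem_filter, Fin.revPerm_apply] at hx
    obtain ⟨k, hk⟩ := exists_inversionPair_eq hw hred hx.2
    exact ⟨k, (mem_orbitSteps w).2 (by rw [hk]), by rw [hk]⟩

end MaxPreancestry

end Preancestry

theorem max_dim_preancestry_longest_general (n : ℕ) (w : List (Fin n))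
    (hw : (w.map cox).prod = (Fin.revPerm : Equiv.Perm (Fin (n+1))))
    (hred : w.length = invCount (Fin.revPerm : Equiv.Perm (Fin (n+1)))) :
    (∀ ρ : Fin (w.length + 1) → Equiv.Perm (Fin (n+1)),
        IsPreancestry w ρ → preDim w ρ ≤ n^2 / 4) ∧
    (∃! ρ : Fin (w.length + 1) → Equiv.Perm (Fin (n+1)),
        IsPreancestry w ρ ∧ preDim w ρ = n^2 / 4) := by
  open Preancestry in
  have hlen : w.length = 2 * (n^2 / 4) + (n + 1) / 2 := by
    rw [hred, invCount_revPerm, choose_two_succ]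
  have hmax := isPreancestry_maxPreancestry hw hred
  refine ⟨fun ρ hρ => ?_, ⟨maxPreancestry w, ⟨hmax, ?_⟩, fun ρ ⟨hρ, hdim⟩ => ?_⟩⟩
  · have := two_mul_preDim_add_card_staySteps hρ
    have := card_staySteps_ge hw hρ
    omega
  · have := two_mul_preDim_add_card_staySteps hmax
    rw [staySteps_maxPreancestry hw hred, card_orbitSteps hw hred] at this
    omega
  · have := two_mul_preDim_add_card_staySteps hρ
    have hcard : (staySteps ρ).card ≤ (n + 1) / 2 := by omega
    refine eq_of_staySteps_eq hρ hmax ?_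
    rw [staySteps_maxPreancestry hw hred]
    exact Finset.eq_of_subset_of_card_le (staySteps_subset_orbitSteps hw hρ hcard)
      (by rw [card_orbitSteps hw hred]; omega)

/-- For `n ≥ 2` and a reduced word `w` of the longest element `η ∈ S_{n+1}`, the largest
possible dimension of a preancestry is `⌊n²/4⌋`, and there is a unique preancestry of this
maximal dimension. -/
theorem max_dim_preancestry_longest (n : ℕ) (hn : 2 ≤ n) (w : List (Fin n))
    (hw : (w.map cox).prod = (Fin.revPerm : Equiv.Perm (Fin (n+1))))
    (hred : w.length = invCount (Fin.revPerm : Equiv.Perm (Fin (n+1)))) :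
    (∀ ρ : Fin (w.length + 1) → Equiv.Perm (Fin (n+1)),
        IsPreancestry w ρ → preDim w ρ ≤ n^2 / 4) ∧
    (∃! ρ : Fin (w.length + 1) → Equiv.Perm (Fin (n+1)),
        IsPreancestry w ρ ∧ preDim w ρ = n^2 / 4) :=
  max_dim_preancestry_longest_general n w hw hred
end

section
/- Let Lo¹_{n+1} be the group of real lower triangular (n+1)×(n+1) matrices with all diagonal entries 1, and for σ ∈ S_{n+1} let Lo_σ = {L ∈ Lo¹_{n+1} : for all i > j, L_{ij} ≠ 0 implies (j,i) ∈ Inv(σ)}. Then Lo_σ is a subgroup of Lo¹_{n+1}. -/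
/-- The set of unipotent lower triangular real matrices. -/
def Lo1 (m : ℕ) : Set (Matrix (Fin m) (Fin m) ℝ) :=
  {L | (∀ i, L i i = 1) ∧ ∀ i j : Fin m, i < j → L i j = 0}

/-- `Lo_σ`: unipotent lower triangular matrices whose nonzero subdiagonal entries `L i j`
(`j < i`) only occur at inversions `(j,i) ∈ Inv(σ)`, i.e. `σ i < σ j`. -/
def LoSet (m : ℕ) (σ : Equiv.Perm (Fin m)) : Set (Matrix (Fin m) (Fin m) ℝ) :=
  {L | L ∈ Lo1 m ∧ ∀ i j : Fin m, j < i → L i j ≠ 0 → σ i < σ j}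

/-!
Write `L = 1 + N`. Membership in `Lo_σ` says exactly that every nonzero entry `N i j` sits at an
inversion `(j, i)` of `σ`. Since `Inv σ` is transitive, such matrices `N` form a non-unital ring,
so `Lo_σ` is closed under products; and such an `N` is strictly lower triangular, hence nilpotent,
so `(1 + N)⁻¹ = ∑ (-N) ^ k` lies in `Lo_σ` again.
-/

open Finset

namespace NonUnitalSubring

variable {A : Type*} [Ring A] (S : NonUnitalSubring A)

theorem pow_succ_mem {x : A} (hx : x ∈ S) (k : ℕ) : x ^ (k + 1) ∈ S := by
  induction k with
  | zero => simpa using hx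
  | succ k ih => rw [pow_succ]; exact S.mul_mem ih hx

theorem mul_sub_one_mem {a b : A} (ha : a - 1 ∈ S) (hb : b - 1 ∈ S) : a * b - 1 ∈ S := by
  have h : a * b - 1 = (a - 1) * (b - 1) + (a - 1) + (b - 1) := by noncomm_ring
  rw [h]
  exact S.add_mem (S.add_mem (S.mul_mem ha hb) ha) hb

/-- The inverse of `a = 1 + x` is the finite geometric series `∑ (-x) ^ i`. -/
theorem exists_inverse_of_isNilpotent_sub_one {a : A} (ha : a - 1 ∈ S)
    (hnil : IsNilpotent (a - 1)) : ∃ b, b - 1 ∈ S ∧ a * b = 1 ∧ b * a = 1 := by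
  obtain ⟨k, hk⟩ := hnil
  set x := a - 1
  have hax : a = 1 - -x := by simp [x]
  have hvanish : (-x) ^ (k + 1) = 0 := by rw [neg_pow, pow_succ x, hk, zero_mul, mul_zero]
  refine ⟨∑ i ∈ range (k + 1), (-x) ^ i, ?_, ?_, ?_⟩
  · rw [sum_range_succ', pow_zero, add_sub_cancel_right]
    exact S.sum_mem fun i _ => S.pow_succ_mem (S.neg_mem ha) i
  · rw [hax, mul_neg_geom_sum, hvanish, sub_zero]
  · rw [hax, geom_sum_mul_neg, hvanish, sub_zero]

end NonUnitalSubring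

namespace Matrix

variable {ι R : Type*} [Fintype ι]

theorem exists_ne_zero_of_mul_apply_ne_zero [NonUnitalNonAssocSemiring R]
    {A B : Matrix ι ι R} {i j : ι} (h : (A * B) i j ≠ 0) : ∃ k, A i k ≠ 0 ∧ B k j ≠ 0 := by
  obtain ⟨k, -, hk⟩ := exists_ne_zero_of_sum_ne_zero h
  exact ⟨k, left_ne_zero_of_mul hk, right_ne_zero_of_mul hk⟩

def supportedOn [NonUnitalRing R] (s : ι → ι → Prop) [IsTrans ι s] :
    NonUnitalSubring (Matrix ι ι R) where
  carrier := {A | ∀ i j, A i j ≠ 0 → s i j}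
  zero_mem' _ _ h := absurd rfl h
  add_mem' {A B} hA hB i j h := by
    by_contra hs
    exact h (by simp [not_imp_comm.mp (hA i j) hs, not_imp_comm.mp (hB i j) hs])
  neg_mem' {A} hA i j h := hA i j (by simpa using h)
  mul_mem' {A B} hA hB i j h := by
    obtain ⟨k, hik, hkj⟩ := exists_ne_zero_of_mul_apply_ne_zero h
    exact _root_.trans (hA i k hik) (hB k j hkj)

theorem mem_supportedOn [NonUnitalRing R] {s : ι → ι → Prop} [IsTrans ι s] {A : Matrix ι ι R} :
    A ∈ supportedOn s ↔ ∀ i j, A i j ≠ 0 → s i j :=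
  Iff.rfl

/-- By Cayley–Hamilton, as the characteristic polynomial is `X ^ card ι`. -/
theorem isNilpotent_of_isLowerTriangular [CommRing R] [LinearOrder ι] {N : Matrix ι ι R}
    (hN : N.IsLowerTriangular) (hdiag : ∀ i, N i i = 0) : IsNilpotent N := by
  classical
  have hchar : N.charpoly = Polynomial.X ^ Fintype.card ι := by
    simp [charpoly, det_of_isLowerTriangular _ hN.charmatrix, hdiag]
  exact ⟨Fintype.card ι, by simpa [hchar] using aeval_self_charpoly N⟩

theorem isNilpotent_of_mem_supportedOn [CommRing R] [LinearOrder ι] {s : ι → ι → Prop}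
    [IsTrans ι s] (hs : ∀ i j, s i j → j < i) {N : Matrix ι ι R} (hN : N ∈ supportedOn s) :
    IsNilpotent N :=
  isNilpotent_of_isLowerTriangular
    (fun i j hij => by_contra fun h => (hs i j (hN i j h)).asymm hij)
    (fun i => by_contra fun h => lt_irrefl i (hs i i (hN i i h)))

end Matrix

namespace Equiv.Perm

variable {α : Type*} [LinearOrder α]

/-- `σ.InvBelow i j` says that `(j, i) ∈ Inv σ`, written as the position `(i, j)` of a matrix
entry below the diagonal. -/
def InvBelow (σ : Perm α) (i j : α) : Prop :=
  j < i ∧ σ i < σ j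

instance (σ : Perm α) : IsTrans α σ.InvBelow :=
  ⟨fun _ _ _ hij hjk => ⟨hjk.1.trans hij.1, hij.2.trans hjk.2⟩⟩

end Equiv.Perm

theorem mem_LoSet_iff_sub_one_mem {m : ℕ} {σ : Equiv.Perm (Fin m)}
    {L : Matrix (Fin m) (Fin m) ℝ} :
    L ∈ LoSet m σ ↔ L - 1 ∈ Matrix.supportedOn σ.InvBelow := by
  rw [Matrix.mem_supportedOn]
  constructor
  · rintro ⟨⟨hdiag, hupper⟩, hinv⟩ i j h
    rcases lt_trichotomy j i with hji | rfl | hij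
    · exact ⟨hji, hinv i j hji (by simpa [Matrix.one_apply_ne hji.ne'] using h)⟩
    · simp [hdiag] at h
    · simp [Matrix.one_apply_ne hij.ne, hupper i j hij] at h
  · intro h
    refine ⟨⟨fun i => ?_, fun i j hij => ?_⟩, fun i j hji hL => (h i j ?_).2⟩
    · by_contra hne
      exact lt_irrefl i (h i i (by simpa [sub_eq_zero] using hne)).1
    · by_contra hne
      exact (h i j (by simpa [Matrix.one_apply_ne hij.ne] using hne)).1.asymm hij
    · simpa [Matrix.one_apply_ne hji.ne'] using hL

/-- `Lo_σ` is a subgroup of the group `Lo¹_{n+1}` of unipotent lower triangular matrices: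
it contains the identity and is closed under multiplication and inverses. -/
theorem LoSet_is_subgroup (n : ℕ) (σ : Equiv.Perm (Fin (n+1))) :
    (1 : Matrix (Fin (n+1)) (Fin (n+1)) ℝ) ∈ LoSet (n+1) σ ∧
    (∀ L₁ ∈ LoSet (n+1) σ, ∀ L₂ ∈ LoSet (n+1) σ, L₁ * L₂ ∈ LoSet (n+1) σ) ∧
    (∀ L ∈ LoSet (n+1) σ, ∃ L' ∈ LoSet (n+1) σ, L * L' = 1 ∧ L' * L = 1) := by
  simp only [mem_LoSet_iff_sub_one_mem]
  refine ⟨by simp [zero_mem], fun L₁ h₁ L₂ h₂ => NonUnitalSubring.mul_sub_one_mem _ h₁ h₂,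
    fun L hL => NonUnitalSubring.exists_inverse_of_isNilpotent_sub_one _ hL
      (Matrix.isNilpotent_of_mem_supportedOn (fun _ _ h => h.1) hL)⟩
end
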